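/- arXiv:2605.03960 — 6 statements merged into one kernel-verified Lean document; each statement's English description precedes it below -/
import Mathlib

section
/- Let d be a positive integer and (λ_n)_{n≥1} a nondecreasing sequence of positive real numbers with λ_n/n^{2/d} → L as n → ∞ for some L > 0, and set ρ_n = √λ_n, Θ_D(t) = Σ_{n≥1} e^{−ρ_n t}. Then for every integer m ≥ d + 1 there exists a locally bounded function α : (−π/2, π/2) → ℝ_{>0} such that |t^{m−1} Θ_D(t)| ≤ α(θ) for every θ ∈ (−π/2, π/2) and every t = r e^{iθ} with r > 0. -/
/-!
The Weyl asymptotics and positivity of the `λₙ` give `√λₙ ≥ c (n+1)^{1/d}` for some `c > 0`.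
For `s = Re t > 0` the terms satisfy `|e^{-ρₙ t}| = e^{-ρₙ s}`, and since `(n+1)^{1/d} ≥ 1` half of
the exponent can be split off:
`|Θ_D(t)| ≤ e^{-cs/2} Σ e^{-(cs/2)(n+1)^{1/d}} ≤ e^{-cs/2} d! (2/(cs))^d`,
the last step by the integral test against `∫₀^∞ e^{-b x^{1/d}} dx = d!/b^d`. With `t = r e^{iθ}`,
the factor `r^d` cancels `s^{-d}` up to `cos^{-d} θ`, and the remaining `r^{m-1-d} e^{-cs/2}` is
bounded through `x^k e^{-x} ≤ k!`; so `α(θ) = (m-1-d)! d! (2/(c cos θ))^{m-1}` works.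
-/

open Filter MeasureTheory Set
open scoped Topology Real

open Real Nat

lemma exists_pos_le_of_tendsto {u : ℕ → ℝ} {L : ℝ} (hu : ∀ n, 0 < u n) (hL : 0 < L)
    (h : Tendsto u atTop (𝓝 L)) : ∃ c > 0, ∀ n, c ≤ u n := by
  obtain ⟨c, hcK, hmin⟩ := h.isCompact_insert_range.exists_isMinOn (insert_nonempty _ _)
    continuousOn_id
  refine ⟨c, ?_, fun n => hmin (mem_insert_of_mem _ (mem_range_self n))⟩
  rcases hcK with rfl | ⟨n, rfl⟩
  exacts [hL, hu n]

lemma exists_pos_mul_rpow_le_sqrt {lam : ℕ → ℝ} {q L : ℝ} (hpos : ∀ n, 0 < lam n) (hL : 0 < L)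
    (h : Tendsto (fun n : ℕ => lam n / ((n : ℝ) + 1) ^ q) atTop (𝓝 L)) :
    ∃ c > 0, ∀ n : ℕ, c * ((n : ℝ) + 1) ^ (q / 2) ≤ √(lam n) := by
  obtain ⟨c, hc, hle⟩ := exists_pos_le_of_tendsto (fun n => div_pos (hpos n) (by positivity)) hL h
  refine ⟨√c, sqrt_pos.2 hc, fun n => ?_⟩
  have hn : (0 : ℝ) < (n : ℝ) + 1 := by positivity
  have hlow : c * ((n : ℝ) + 1) ^ q ≤ lam n := (le_div_iff₀ (by positivity)).1 (hle n)
  calc √c * ((n : ℝ) + 1) ^ (q / 2) = √(c * ((n : ℝ) + 1) ^ q) := by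
        rw [sqrt_mul hc.le, sqrt_eq_rpow (_ ^ q), ← rpow_mul hn.le, div_eq_mul_one_div q]
    _ ≤ √(lam n) := sqrt_le_sqrt hlow

section IntegralTest

variable {p b : ℝ}

lemma integrableOn_exp_neg_mul_rpow (hp : 0 < p) (hb : 0 < b) :
    IntegrableOn (fun x : ℝ => exp (-b * x ^ p)) (Ioi 0) := by
  simpa using integrableOn_rpow_mul_exp_neg_mul_rpow (s := 0) (by norm_num) hp hb

lemma antitoneOn_exp_neg_mul_rpow (hp : 0 < p) (hb : 0 < b) :
    AntitoneOn (fun x : ℝ => exp (-b * x ^ p)) (Ici 0) := fun x hx y _ hxy => by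
  have := rpow_le_rpow hx hxy hp.le
  simp only [neg_mul, exp_le_exp, neg_le_neg_iff]
  gcongr

lemma summable_exp_neg_mul_rpow_add_one (hp : 0 < p) (hb : 0 < b) :
    Summable (fun n : ℕ => exp (-b * ((n : ℝ) + 1) ^ p)) := by
  have := (antitoneOn_exp_neg_mul_rpow hp hb).summable_of_integrableOn_Ioi_zero
    (integrableOn_exp_neg_mul_rpow hp hb) (fun _ _ => (exp_pos _).le)
  exact_mod_cast (summable_nat_add_iff 1).2 this

lemma tsum_exp_neg_mul_rpow_add_one_le (hp : 0 < p) (hb : 0 < b) :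
    ∑' n : ℕ, exp (-b * ((n : ℝ) + 1) ^ p) ≤ b ^ (-1 / p) * Gamma (1 / p + 1) := by
  rw [← integral_exp_neg_mul_rpow hp hb]
  exact_mod_cast (antitoneOn_exp_neg_mul_rpow hp hb).tsum_add_one_le_integral
    (integrableOn_exp_neg_mul_rpow hp hb) (fun _ _ => (exp_pos _).le)

end IntegralTest

lemma exp_neg_mul_le_of_mul_rpow_le {ρ c p s : ℝ} {n : ℕ} (hc : 0 < c) (hp : 0 < p) (hs : 0 < s)
    (hρ : c * ((n : ℝ) + 1) ^ p ≤ ρ) :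
    exp (-(ρ * s)) ≤ exp (-(c * s / 2)) * exp (-(c * s / 2) * ((n : ℝ) + 1) ^ p) := by
  have hone : 1 ≤ ((n : ℝ) + 1) ^ p := one_le_rpow (by linarith [n.cast_nonneg (α := ℝ)]) hp.le
  rw [← exp_add, exp_le_exp]
  nlinarith [mul_le_mul_of_nonneg_right hρ hs.le,
    mul_le_mul_of_nonneg_left hone (by positivity : 0 ≤ c * s)]

lemma norm_tsum_cexp_neg_mul_le {ρ : ℕ → ℝ} {c p : ℝ} (hc : 0 < c) (hp : 0 < p)
    (hρ : ∀ n : ℕ, c * ((n : ℝ) + 1) ^ p ≤ ρ n) {t : ℂ} (ht : 0 < t.re) :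
    ‖∑' n, Complex.exp (-(ρ n : ℂ) * t)‖ ≤
      exp (-(c * t.re / 2)) * ((c * t.re / 2) ^ (-1 / p) * Gamma (1 / p + 1)) := by
  set b := c * t.re / 2
  have hb : 0 < b := by positivity
  have hnorm : ∀ n, ‖Complex.exp (-(ρ n : ℂ) * t)‖ = exp (-(ρ n * t.re)) := by
    simp [Complex.norm_exp]
  have hterm : ∀ n, ‖Complex.exp (-(ρ n : ℂ) * t)‖ ≤ exp (-b) * exp (-b * ((n : ℝ) + 1) ^ p) :=
    fun n => (hnorm n).trans_le (exp_neg_mul_le_of_mul_rpow_le hc hp ht (hρ n))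
  have hmajor := (summable_exp_neg_mul_rpow_add_one hp hb).mul_left (exp (-b))
  have hsum := hmajor.of_nonneg_of_le (fun _ => norm_nonneg _) hterm
  calc ‖∑' n, Complex.exp (-(ρ n : ℂ) * t)‖
      ≤ ∑' n, ‖Complex.exp (-(ρ n : ℂ) * t)‖ := norm_tsum_le_tsum_norm hsum
    _ ≤ ∑' n : ℕ, exp (-b) * exp (-b * ((n : ℝ) + 1) ^ p) := hsum.tsum_le_tsum hterm hmajor
    _ = exp (-b) * ∑' n : ℕ, exp (-b * ((n : ℝ) + 1) ^ p) := tsum_mul_left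
    _ ≤ exp (-b) * (b ^ (-1 / p) * Gamma (1 / p + 1)) := by
      gcongr; exact tsum_exp_neg_mul_rpow_add_one_le hp hb

lemma pow_mul_exp_neg_mul_le {a r : ℝ} (ha : 0 < a) (hr : 0 ≤ r) (k : ℕ) :
    r ^ k * exp (-(a * r)) ≤ k ! / a ^ k := by
  have h := pow_div_factorial_le_exp _ (mul_nonneg ha.le hr) k
  rw [div_le_iff₀ (by positivity), mul_pow] at h
  rw [le_div_iff₀ (by positivity), exp_neg]
  calc r ^ k * (exp (a * r))⁻¹ * a ^ k = a ^ k * r ^ k * (exp (a * r))⁻¹ := by ring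
    _ ≤ exp (a * r) * k ! * (exp (a * r))⁻¹ := by gcongr
    _ = k ! := by field_simp

lemma norm_pow_mul_tsum_cexp_neg_mul_le {ρ : ℕ → ℝ} {c : ℝ} {d : ℕ} (hc : 0 < c) (hd : 0 < d)
    (hρ : ∀ n : ℕ, c * ((n : ℝ) + 1) ^ (1 / d : ℝ) ≤ ρ n) {t : ℂ} (ht : 0 < t.re) (k : ℕ) :
    ‖t ^ (k + d) * ∑' n, Complex.exp (-(ρ n : ℂ) * t)‖ ≤
      k ! * d ! / (c * t.re / (2 * ‖t‖)) ^ (k + d) := by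
  have hdR : (0 : ℝ) < d := by exact_mod_cast hd
  have hr : 0 < ‖t‖ := ht.trans_le (Complex.re_le_norm t)
  have hΘ := norm_tsum_cexp_neg_mul_le hc (by positivity) hρ ht
  have hd_inv : (-1 / (1 / d : ℝ)) = -d := by field_simp
  rw [one_div_one_div, hd_inv, rpow_neg (by positivity), rpow_natCast, Gamma_nat_eq_factorial]
    at hΘ
  set s := t.re
  set r := ‖t‖
  have hexp := pow_mul_exp_neg_mul_le (a := c * s / (2 * r)) (by positivity) hr.le k
  have har : c * s / (2 * r) * r = c * s / 2 := by field_simp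
  rw [har] at hexp
  rw [norm_mul, norm_pow, pow_add]
  calc r ^ k * r ^ d * ‖∑' n, Complex.exp (-(ρ n : ℂ) * t)‖
      ≤ r ^ k * r ^ d * (exp (-(c * s / 2)) * (((c * s / 2) ^ d)⁻¹ * d !)) := by gcongr
    _ = (r ^ k * exp (-(c * s / 2))) * (d ! / (c * s / (2 * r)) ^ d) := by
      field_simp; rw [← mul_pow, mul_comm r, har]
    _ ≤ k ! / (c * s / (2 * r)) ^ k * (d ! / (c * s / (2 * r)) ^ d) := by gcongr
    _ = k ! * d ! / (c * s / (2 * r)) ^ (k + d) := by rw [pow_add]; field_simp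

theorem stmt_3_general (d : ℕ) (hd : 0 < d) (lam : ℕ → ℝ) (hpos : ∀ n, 0 < lam n)
    (L : ℝ) (hL : 0 < L)
    (hweyl : Tendsto (fun n : ℕ => lam n / (((n : ℝ) + 1) ^ ((2 : ℝ) / (d : ℝ))))
      atTop (𝓝 L))
    (m : ℕ) (hm : d + 1 ≤ m) :
    ∃ α : ℝ → ℝ,
      (∀ θ ∈ Set.Ioo (-(π / 2)) (π / 2), 0 < α θ) ∧
      (∀ K : Set ℝ, K ⊆ Set.Ioo (-(π / 2)) (π / 2) → IsCompact K →
        ∃ M : ℝ, ∀ θ ∈ K, |α θ| ≤ M) ∧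
      ∀ θ ∈ Set.Ioo (-(π / 2)) (π / 2), ∀ r : ℝ, 0 < r →
        ‖((r : ℂ) * Complex.exp ((θ : ℂ) * Complex.I)) ^ (m - 1) *
            ∑' n : ℕ, Complex.exp (-(Real.sqrt (lam n) : ℂ) *
              ((r : ℂ) * Complex.exp ((θ : ℂ) * Complex.I)))‖ ≤ α θ := by
  obtain ⟨c, hc, hρ⟩ := exists_pos_mul_rpow_le_sqrt hpos hL hweyl
  rw [show (2 : ℝ) / d / 2 = 1 / d by ring] at hρ
  obtain ⟨k, hk⟩ : ∃ k, m - 1 = k + d := ⟨m - 1 - d, by omega⟩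
  refine ⟨fun θ => k ! * d ! / (c * cos θ / 2) ^ (m - 1), fun θ hθ => ?_, fun K hK hKc => ?_,
    fun θ hθ r hr => ?_⟩
  · have := cos_pos_of_mem_Ioo hθ
    positivity
  · have hcont : ContinuousOn (fun θ => k ! * d ! / (c * cos θ / 2) ^ (m - 1)) K :=
      continuousOn_const.div (by fun_prop) fun θ hθ =>
        pow_ne_zero _ (by have := cos_pos_of_mem_Ioo (hK hθ); positivity)
    simpa only [norm_eq_abs] using hKc.exists_bound_of_continuousOn hcont
  · have hcos := cos_pos_of_mem_Ioo hθ
    have hre : ((r : ℂ) * Complex.exp ((θ : ℂ) * Complex.I)).re = r * cos θ := by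
      rw [Complex.re_ofReal_mul, Complex.exp_ofReal_mul_I_re]
    have hnorm : ‖(r : ℂ) * Complex.exp ((θ : ℂ) * Complex.I)‖ = r := by
      rw [norm_mul, Complex.norm_exp_ofReal_mul_I, Complex.norm_real, norm_eq_abs, abs_of_pos hr,
        mul_one]
    have hre_pos : 0 < ((r : ℂ) * Complex.exp ((θ : ℂ) * Complex.I)).re := by
      rw [hre]; positivity
    have h := norm_pow_mul_tsum_cexp_neg_mul_le hc hd hρ hre_pos k
    rwa [hre, hnorm, ← hk, show c * (r * cos θ) / (2 * r) = c * cos θ / 2 by field_simp] at h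

/-- For every integer `m ≥ d + 1` there is a locally bounded function
`α : (-π/2, π/2) → ℝ_{>0}` such that `|t^{m-1} Θ_D(t)| ≤ α(θ)` for every
`θ ∈ (-π/2, π/2)` and `t = r e^{iθ}` with `r > 0`. -/
theorem stmt_3 (d : ℕ) (hd : 0 < d) (lam : ℕ → ℝ) (hpos : ∀ n, 0 < lam n)
    (hmono : Monotone lam) (L : ℝ) (hL : 0 < L)
    (hweyl : Tendsto (fun n : ℕ => lam n / (((n : ℝ) + 1) ^ ((2 : ℝ) / (d : ℝ))))
      atTop (𝓝 L))
    (m : ℕ) (hm : d + 1 ≤ m) :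
    ∃ α : ℝ → ℝ,
      (∀ θ ∈ Set.Ioo (-(π / 2)) (π / 2), 0 < α θ) ∧
      (∀ K : Set ℝ, K ⊆ Set.Ioo (-(π / 2)) (π / 2) → IsCompact K →
        ∃ M : ℝ, ∀ θ ∈ K, |α θ| ≤ M) ∧
      ∀ θ ∈ Set.Ioo (-(π / 2)) (π / 2), ∀ r : ℝ, 0 < r →
        ‖((r : ℂ) * Complex.exp ((θ : ℂ) * Complex.I)) ^ (m - 1) *
            ∑' n : ℕ, Complex.exp (-(Real.sqrt (lam n) : ℂ) *
              ((r : ℂ) * Complex.exp ((θ : ℂ) * Complex.I)))‖ ≤ α θ :=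
  stmt_3_general d hd lam hpos L hL hweyl m hm
end

section
/- Let d be a positive integer and (λ_n)_{n≥1} a nondecreasing sequence of positive real numbers with λ_n/n^{2/d} → L as n → ∞ for some L > 0, and let Θ(t) = Σ_{n≥1} e^{−λ_n t}. Then for every integer m′ ≥ ⌊d/2⌋ + 1, every θ ∈ (−π/2, π/2), and every λ ∈ ℂ with Re(λ e^{iθ}) > 0, the improper integral ∫_0^{e^{iθ}∞} (−t)^{m′−1} Θ(t) e^{−λ t} dt over the ray {r e^{iθ} : r > 0} converges absolutely and equals Σ_{n≥1} (−1)^{m′−1} (m′−1)! / (λ + λ_n)^{m′}, the series on the right converging absolutely. -/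
/-!
Expanding `Θ`, the integrand is the sum over `n` of the Laplace integrands of `(-t)^k`,
`k = m' - 1`, at `b = λ + λ_n`. Along the ray each of them is a Gamma integral:
`∫_0^∞ (-r e^{iθ})^k e^{-b r e^{iθ}} e^{iθ} dr = (-1)^k k! / b^{k+1}`, with absolute integral
`k! / Re(b e^{iθ})^{k+1}`. Since `Re((λ + λ_n) e^{iθ}) = Re(λ e^{iθ}) + λ_n cos θ` and the
Weyl law gives `λ_n ≳ n^{2/d}`, these absolute integrals are `O(n^{-2(k+1)/d})`, which is
summable because `2(k+1) > d`. Fubini–Tonelli then justifies integrating term by term.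
-/

open Filter MeasureTheory Set
open scoped Topology Real

/-- The point `r e^{iθ}` of the ray of direction `θ`. -/
noncomputable def rayPt (θ r : ℝ) : ℂ := (r : ℂ) * Complex.exp ((θ : ℂ) * Complex.I)

/-- The unit direction `e^{iθ}`. -/
noncomputable def rayDir (θ : ℝ) : ℂ := Complex.exp ((θ : ℂ) * Complex.I)

open scoped Nat

section GammaIntegral

lemma integral_pow_mul_exp_neg_mul {β : ℝ} (k : ℕ) (hβ : 0 < β) :
    ∫ r in Ioi (0 : ℝ), r ^ k * Real.exp (-β * r) = k ! / β ^ (k + 1) := by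
  have h := Real.integral_rpow_mul_exp_neg_mul_Ioi (a := ((k + 1 : ℕ) : ℝ)) (by positivity) hβ
  rw [Real.rpow_natCast, Nat.cast_succ, Real.Gamma_nat_eq_factorial, add_sub_cancel_right] at h
  simpa [neg_mul, div_eq_mul_inv, mul_comm] using h

lemma integrableOn_pow_mul_exp_neg_mul {β : ℝ} (k : ℕ) (hβ : 0 < β) :
    IntegrableOn (fun r : ℝ ↦ r ^ k * Real.exp (-β * r)) (Ioi 0) := by
  refine (integrableOn_rpow_mul_exp_neg_mul_rpow (p := 1) (s := k)
    (by linarith [k.cast_nonneg (α := ℝ)]) zero_lt_one hβ).congr_fun (fun r _ ↦ ?_)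
    measurableSet_Ioi
  simp only [Real.rpow_natCast, Real.rpow_one]

variable {b : ℂ}

lemma norm_ofReal_pow_mul_exp_neg_mul (k : ℕ) (b : ℂ) {r : ℝ} (hr : 0 ≤ r) :
    ‖(r : ℂ) ^ k * Complex.exp (-b * r)‖ = r ^ k * Real.exp (-b.re * r) := by
  simp [Complex.norm_exp, abs_of_nonneg hr]

lemma integrableOn_ofReal_pow_mul_exp_neg_mul (k : ℕ) (hb : 0 < b.re) :
    IntegrableOn (fun r : ℝ ↦ (r : ℂ) ^ k * Complex.exp (-b * r)) (Ioi 0) := by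
  refine (integrableOn_pow_mul_exp_neg_mul k hb).mono' (by fun_prop) ?_
  filter_upwards [ae_restrict_mem measurableSet_Ioi] with r hr
  exact (norm_ofReal_pow_mul_exp_neg_mul k b (le_of_lt hr)).le

lemma tendsto_ofReal_pow_mul_exp_neg_mul_atTop (k : ℕ) (hb : 0 < b.re) :
    Tendsto (fun r : ℝ ↦ (r : ℂ) ^ k * Complex.exp (-b * r)) atTop (𝓝 0) := by
  rw [tendsto_zero_iff_norm_tendsto_zero]
  refine (tendsto_rpow_mul_exp_neg_mul_atTop_nhds_zero k b.re hb).congr' ?_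
  filter_upwards [eventually_ge_atTop 0] with r hr
  rw [norm_ofReal_pow_mul_exp_neg_mul k b hr, Real.rpow_natCast]

lemma mul_integral_ofReal_pow_succ_mul_exp_neg_mul (k : ℕ) (hb : 0 < b.re) :
    b * ∫ r in Ioi (0 : ℝ), (r : ℂ) ^ (k + 1) * Complex.exp (-b * r) =
      (k + 1) * ∫ r in Ioi (0 : ℝ), (r : ℂ) ^ k * Complex.exp (-b * r) := by
  have hderiv : ∀ r ∈ Ioi (0 : ℝ),
      HasDerivAt (fun r : ℝ ↦ (r : ℂ) ^ (k + 1) * Complex.exp (-b * r))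
        ((k + 1) * ((r : ℂ) ^ k * Complex.exp (-b * r)) -
          b * ((r : ℂ) ^ (k + 1) * Complex.exp (-b * r))) r := by
    intro r _
    refine ((hasDerivAt_pow (k + 1) (r : ℂ)).mul
      ((hasDerivAt_id (r : ℂ)).const_mul (-b)).cexp).comp_ofReal.congr_deriv ?_
    simp only [id, Nat.add_sub_cancel]
    push_cast
    ring
  have hftc := integral_Ioi_of_hasDerivAt_of_tendsto (by fun_prop : Continuous _).continuousWithinAt
    hderiv (((integrableOn_ofReal_pow_mul_exp_neg_mul k hb).const_mul _).sub
      ((integrableOn_ofReal_pow_mul_exp_neg_mul (k + 1) hb).const_mul _))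
    (tendsto_ofReal_pow_mul_exp_neg_mul_atTop (k + 1) hb)
  rw [integral_sub ((integrableOn_ofReal_pow_mul_exp_neg_mul k hb).const_mul _)
    ((integrableOn_ofReal_pow_mul_exp_neg_mul (k + 1) hb).const_mul _),
    integral_const_mul, integral_const_mul] at hftc
  rw [Complex.ofReal_zero, zero_pow k.succ_ne_zero, zero_mul, sub_zero] at hftc
  linear_combination -hftc

lemma integral_ofReal_pow_mul_exp_neg_mul (k : ℕ) (hb : 0 < b.re) :
    ∫ r in Ioi (0 : ℝ), (r : ℂ) ^ k * Complex.exp (-b * r) = k ! / b ^ (k + 1) := by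
  have hb0 : b ≠ 0 := by rintro rfl; simp at hb
  induction k with
  | zero =>
    simpa [neg_div, div_neg] using integral_exp_mul_complex_Ioi (a := -b) (by simpa using hb) 0
  | succ k ih =>
    have h := mul_integral_ofReal_pow_succ_mul_exp_neg_mul k hb
    rw [ih] at h
    rw [eq_div_iff (pow_ne_zero _ hb0)]
    calc _ = (b * ∫ r in Ioi (0 : ℝ), (r : ℂ) ^ (k + 1) * Complex.exp (-b * r)) *
          b ^ (k + 1) := by ring
      _ = _ := by
          rw [h, Nat.factorial_succ]
          field_simp
          push_cast
          ring

end GammaIntegral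

section Ray

lemma norm_rayDir (θ : ℝ) : ‖rayDir θ‖ = 1 := by
  simp [rayDir]

lemma re_rayDir (θ : ℝ) : (rayDir θ).re = Real.cos θ := by
  simp [rayDir, Complex.exp_ofReal_mul_I_re]

lemma re_add_ofReal_mul_rayDir (z : ℂ) (x θ : ℝ) :
    ((z + x) * rayDir θ).re = (z * rayDir θ).re + Real.cos θ * x := by
  rw [add_mul, Complex.add_re, Complex.re_ofReal_mul, re_rayDir, mul_comm x]

lemma re_add_ofReal_mul_rayDir_pos {z : ℂ} {x θ : ℝ} (hz : 0 < (z * rayDir θ).re)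
    (hcos : 0 < Real.cos θ) (hx : 0 ≤ x) : 0 < ((z + x) * rayDir θ).re := by
  rw [re_add_ofReal_mul_rayDir]
  positivity

/-- The integrand of `L^θ((-t)^k)(b)` after the substitution `t = r e^{iθ}`. -/
noncomputable def rayLaplaceIntegrand (k : ℕ) (b : ℂ) (θ r : ℝ) : ℂ :=
  (-(rayPt θ r)) ^ k * Complex.exp (-b * rayPt θ r) * rayDir θ

lemma rayLaplaceIntegrand_eq (k : ℕ) (b : ℂ) (θ r : ℝ) :
    rayLaplaceIntegrand k b θ r =
      (-1) ^ k * rayDir θ ^ (k + 1) * ((r : ℂ) ^ k * Complex.exp (-(b * rayDir θ) * r)) := by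
  rw [rayLaplaceIntegrand, show rayPt θ r = r * rayDir θ from rfl,
    show -b * (r * rayDir θ) = -(b * rayDir θ) * r by ring]
  ring

variable {k : ℕ} {b : ℂ} {θ : ℝ}

lemma integrableOn_rayLaplaceIntegrand (hb : 0 < (b * rayDir θ).re) :
    IntegrableOn (rayLaplaceIntegrand k b θ) (Ioi 0) := by
  rw [funext (rayLaplaceIntegrand_eq k b θ)]
  exact (integrableOn_ofReal_pow_mul_exp_neg_mul k hb).const_mul _

lemma integral_rayLaplaceIntegrand (hb : 0 < (b * rayDir θ).re) :
    ∫ r in Ioi (0 : ℝ), rayLaplaceIntegrand k b θ r = (-1) ^ k * k ! / b ^ (k + 1) := by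
  have hdir : rayDir θ ≠ 0 := Complex.exp_ne_zero _
  simp only [rayLaplaceIntegrand_eq, integral_const_mul, integral_ofReal_pow_mul_exp_neg_mul k hb,
    mul_pow]
  field_simp

lemma integral_norm_rayLaplaceIntegrand (hb : 0 < (b * rayDir θ).re) :
    ∫ r in Ioi (0 : ℝ), ‖rayLaplaceIntegrand k b θ r‖ =
      k ! / (b * rayDir θ).re ^ (k + 1) := by
  rw [← integral_pow_mul_exp_neg_mul k hb]
  refine setIntegral_congr_fun measurableSet_Ioi fun r hr ↦ ?_
  rw [rayLaplaceIntegrand_eq, norm_mul, norm_ofReal_pow_mul_exp_neg_mul k _ (le_of_lt hr)]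
  simp [norm_rayDir]

lemma tsum_rayLaplaceIntegrand_add (k : ℕ) (lam : ℕ → ℝ) (b : ℂ) (θ r : ℝ) :
    ∑' n, rayLaplaceIntegrand k (b + lam n) θ r =
      (-(rayPt θ r)) ^ k * (∑' n, Complex.exp (-(lam n : ℂ) * rayPt θ r)) *
        Complex.exp (-b * rayPt θ r) * rayDir θ := by
  rw [mul_assoc, mul_assoc, ← tsum_mul_right, ← tsum_mul_left]
  refine tsum_congr fun n ↦ ?_
  rw [rayLaplaceIntegrand, neg_add, add_mul, Complex.exp_add]
  ring

end Ray

lemma integrable_tsum_of_summable_integral_norm {α E ι : Type*} [MeasurableSpace α]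
    {μ : Measure α} [NormedAddCommGroup E] [CompleteSpace E] [Countable ι] {F : ι → α → E}
    (hF_int : ∀ i, Integrable (F i) μ) (hF_sum : Summable fun i ↦ ∫ a, ‖F i a‖ ∂μ) :
    Integrable (fun a ↦ ∑' i, F i a) μ := by
  have hfin : ∫⁻ a, ∑' i, ‖F i a‖ₑ ∂μ ≠ ⊤ := by
    rw [lintegral_tsum fun i ↦ (hF_int i).aestronglyMeasurable.enorm]
    simp_rw [← ofReal_integral_norm_eq_lintegral_enorm (hF_int _)]
    rw [← ENNReal.ofReal_tsum_of_nonneg (fun _ ↦ integral_nonneg fun _ ↦ norm_nonneg _)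
      hF_sum]
    exact ENNReal.ofReal_ne_top
  have hsum : ∀ᵐ a ∂μ, Summable fun i ↦ F i a := by
    filter_upwards [ae_lt_top' (by fun_prop) hfin] with a ha
    exact (ENNReal.tsum_coe_ne_top_iff_summable.1 ha.ne).of_nnnorm
  refine ⟨aestronglyMeasurable_of_tendsto_ae atTop
    (fun s ↦ Finset.aestronglyMeasurable_fun_sum s fun i _ ↦ (hF_int i).aestronglyMeasurable)
    (hsum.mono fun a ha ↦ ha.hasSum), ?_⟩
  exact (lintegral_mono fun a ↦ enorm_tsum_le_tsum_enorm).trans_lt hfin.lt_top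

lemma eventually_le_of_tendsto_div_rpow {lam : ℕ → ℝ} {s L : ℝ} (hL : 0 < L)
    (h : Tendsto (fun n : ℕ ↦ lam n / ((n : ℝ) + 1) ^ s) atTop (𝓝 L)) :
    ∀ᶠ n : ℕ in atTop, L / 2 * ((n : ℝ) + 1) ^ s ≤ lam n := by
  filter_upwards [h.eventually (eventually_ge_nhds (half_lt_self hL))] with n hn
  rwa [le_div_iff₀ (by positivity)] at hn

lemma summable_one_div_pow_of_le_rpow {f : ℕ → ℝ} {C s : ℝ} {p : ℕ} (hC : 0 < C)
    (hsp : 1 < s * p) (hf : ∀ᶠ n : ℕ in atTop, C * ((n : ℝ) + 1) ^ s ≤ f n) :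
    Summable fun n ↦ 1 / f n ^ p := by
  refine .of_norm_bounded_eventually_nat
    (((Real.summable_one_div_nat_add_rpow 1 (s * p)).2 hsp).mul_left (1 / C ^ p)) ?_
  filter_upwards [hf] with n hn
  have hpos : 0 < C * ((n : ℝ) + 1) ^ s := by positivity
  rw [norm_div, norm_one, norm_pow, Real.norm_of_nonneg (hpos.le.trans hn)]
  calc 1 / f n ^ p ≤ 1 / (C * ((n : ℝ) + 1) ^ s) ^ p :=
        one_div_le_one_div_of_le (by positivity) (pow_le_pow_left₀ hpos.le hn p)
    _ = 1 / C ^ p * (1 / |(n : ℝ) + 1| ^ (s * p)) := by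
        rw [abs_of_pos (by positivity), mul_pow, ← Real.rpow_natCast ((n + 1 : ℝ) ^ s) p,
          ← Real.rpow_mul (by positivity)]
        ring

lemma summable_integral_norm_rayLaplaceIntegrand {d k : ℕ} (hd : 0 < d) (hdk : d < 2 * (k + 1))
    {lam : ℕ → ℝ} (hlam : ∀ n, 0 ≤ lam n) {L : ℝ} (hL : 0 < L)
    (hweyl : Tendsto (fun n : ℕ ↦ lam n / ((n : ℝ) + 1) ^ ((2 : ℝ) / d)) atTop (𝓝 L))
    {θ : ℝ} (hcos : 0 < Real.cos θ) {b : ℂ} (hb : 0 < (b * rayDir θ).re) :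
    Summable fun n ↦ ∫ r in Ioi (0 : ℝ), ‖rayLaplaceIntegrand k (b + lam n) θ r‖ := by
  have hexp : 1 < 2 / (d : ℝ) * (k + 1 : ℕ) := by
    rw [div_mul_eq_mul_div, one_lt_div (by positivity)]
    exact_mod_cast hdk
  simp only [integral_norm_rayLaplaceIntegrand (re_add_ofReal_mul_rayDir_pos hb hcos (hlam _)),
    div_eq_mul_one_div (k ! : ℝ)]
  refine (summable_one_div_pow_of_le_rpow (C := Real.cos θ * (L / 2)) (by positivity) hexp
    ?_).mul_left _
  filter_upwards [eventually_le_of_tendsto_div_rpow hL hweyl] with n hn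
  rw [re_add_ofReal_mul_rayDir, mul_assoc]
  linarith [mul_le_mul_of_nonneg_left hn hcos.le]

theorem stmt_4_general (d : ℕ) (hd : 0 < d) (lam : ℕ → ℝ) (hpos : ∀ n, 0 < lam n)
    (L : ℝ) (hL : 0 < L)
    (hweyl : Tendsto (fun n : ℕ => lam n / (((n : ℝ) + 1) ^ ((2 : ℝ) / (d : ℝ))))
      atTop (𝓝 L))
    (m' : ℕ) (hm' : d / 2 + 1 ≤ m')
    (θ : ℝ) (hθ : θ ∈ Set.Ioo (-(π / 2)) (π / 2))
    (lambda : ℂ) (hlam : 0 < (lambda * rayDir θ).re) :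
    IntegrableOn
      (fun r : ℝ =>
        (-(rayPt θ r)) ^ (m' - 1) *
          (∑' n : ℕ, Complex.exp (-(lam n : ℂ) * rayPt θ r)) *
          Complex.exp (-lambda * rayPt θ r) * rayDir θ)
      (Set.Ioi 0) ∧
    Summable (fun n : ℕ =>
      ‖(-1 : ℂ) ^ (m' - 1) * (Nat.factorial (m' - 1) : ℂ) / (lambda + (lam n : ℂ)) ^ m'‖) ∧
    (∫ r in Set.Ioi (0 : ℝ),
        (-(rayPt θ r)) ^ (m' - 1) *
          (∑' n : ℕ, Complex.exp (-(lam n : ℂ) * rayPt θ r)) *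
          Complex.exp (-lambda * rayPt θ r) * rayDir θ)
      = ∑' n : ℕ,
          (-1 : ℂ) ^ (m' - 1) * (Nat.factorial (m' - 1) : ℂ) / (lambda + (lam n : ℂ)) ^ m' := by
  obtain ⟨k, rfl⟩ : ∃ k, m' = k + 1 := ⟨m' - 1, by omega⟩
  rw [Nat.add_sub_cancel]
  have hcos : 0 < Real.cos θ := Real.cos_pos_of_mem_Ioo hθ
  have hre_pos (n : ℕ) : 0 < ((lambda + lam n) * rayDir θ).re :=
    re_add_ofReal_mul_rayDir_pos hlam hcos (hpos n).le
  have hint (n : ℕ) := integrableOn_rayLaplaceIntegrand (k := k) (hre_pos n)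
  have hsum := summable_integral_norm_rayLaplaceIntegrand (k := k) hd (by omega)
    (fun n ↦ (hpos n).le) hL hweyl hcos hlam
  simp only [← tsum_rayLaplaceIntegrand_add]
  refine ⟨integrable_tsum_of_summable_integral_norm hint hsum,
    hsum.of_nonneg_of_le (fun _ ↦ norm_nonneg _) fun n ↦ ?_, ?_⟩
  · rw [← integral_rayLaplaceIntegrand (hre_pos n)]
    exact norm_integral_le_integral_norm _
  · rw [← integral_tsum_of_summable_integral_norm hint hsum]
    exact tsum_congr fun n ↦ integral_rayLaplaceIntegrand (hre_pos n)

/-- For `m' ≥ ⌊d/2⌋ + 1`, `θ ∈ (-π/2, π/2)` and `Re(λ e^{iθ}) > 0`, the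
Laplace integral of `(-t)^{m'-1} Θ(t)` along the ray of direction `θ` converges
absolutely and equals `Σ_{n≥1} (-1)^{m'-1} (m'-1)! / (λ + λ_n)^{m'}`, the series
converging absolutely. -/
theorem stmt_4 (d : ℕ) (hd : 0 < d) (lam : ℕ → ℝ) (hpos : ∀ n, 0 < lam n)
    (hmono : Monotone lam) (L : ℝ) (hL : 0 < L)
    (hweyl : Tendsto (fun n : ℕ => lam n / (((n : ℝ) + 1) ^ ((2 : ℝ) / (d : ℝ))))
      atTop (𝓝 L))
    (m' : ℕ) (hm' : d / 2 + 1 ≤ m')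
    (θ : ℝ) (hθ : θ ∈ Set.Ioo (-(π / 2)) (π / 2))
    (lambda : ℂ) (hlam : 0 < (lambda * rayDir θ).re) :
    IntegrableOn
      (fun r : ℝ =>
        (-(rayPt θ r)) ^ (m' - 1) *
          (∑' n : ℕ, Complex.exp (-(lam n : ℂ) * rayPt θ r)) *
          Complex.exp (-lambda * rayPt θ r) * rayDir θ)
      (Set.Ioi 0) ∧
    Summable (fun n : ℕ =>
      ‖(-1 : ℂ) ^ (m' - 1) * (Nat.factorial (m' - 1) : ℂ) / (lambda + (lam n : ℂ)) ^ m'‖) ∧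
    (∫ r in Set.Ioi (0 : ℝ),
        (-(rayPt θ r)) ^ (m' - 1) *
          (∑' n : ℕ, Complex.exp (-(lam n : ℂ) * rayPt θ r)) *
          Complex.exp (-lambda * rayPt θ r) * rayDir θ)
      = ∑' n : ℕ,
          (-1 : ℂ) ^ (m' - 1) * (Nat.factorial (m' - 1) : ℂ) / (lambda + (lam n : ℂ)) ^ m' :=
  stmt_4_general d hd lam hpos L hL hweyl m' hm' θ hθ lambda hlam
end

section
/- Let d be a positive integer, (λ_n)_{n≥1} a nondecreasing sequence of positive real numbers with λ_n/n^{2/d} → L as n → ∞ for some L > 0, and s_0 < 0 real. For each i ≥ 0, the series a_i = Σ_{n≥1} e^{s_0 λ_n} (−λ_n)^i converges absolutely. Let F(λ) = Σ_{n≥1} e^{s_0 λ_n} / (λ + λ_n). Then F admits Σ_{i≥0} a_i λ^{−i−1} as a uniform 1-Gevrey asymptotic expansion on subsectors: for every closed subinterval J ⊂ (−π/2, π/2) there exist constants L₀, M > 0 such that for every integer N ≥ 1 and every λ belonging to ⋃_{θ∈J} {λ ∈ ℂ : Re(λ e^{iθ}) > 0}, one has |F(λ) − Σ_{i=0}^{N−1}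 a_i λ^{−i−1}| ≤ L₀ M^N N! |λ|^{−N−1}. -/
open Filter MeasureTheory Set
open scoped Topology Real

/-! Termwise, `1/(λ+μ) - Σ_{i<N} (-μ)^i/λ^{i+1} = (-μ)^N / (λ^N (λ+μ))`. On the subsector,
`|λ + λ_n| ≥ cos m · |λ|` with `m = max(|A|, |B|) < π/2`, and `λ_n^N e^{s₀λ_n}` is at most
`N! (2/|s₀|)^N e^{s₀λ_n/2}`; so the remainder is bounded by
`(Σ_n e^{s₀λ_n/2}) · (2/|s₀|)^N N! / (cos m · |λ|^{N+1})`. The Weyl law `λ_n ~ L n^{2/d}` makes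
`Σ_n e^{-cλ_n}` converge for every `c > 0`. -/

open Finset in
theorem div_add_sub_sum_div_pow_eq {K : Type*} [Field K] (a l m : K) (hl : l ≠ 0)
    (hlm : l + m ≠ 0) (N : ℕ) :
    a / (l + m) - ∑ i ∈ range N, a * (-m) ^ i / l ^ (i + 1) =
      a * (-m) ^ N / (l ^ N * (l + m)) := by
  induction N with
  | zero => simp
  | succ n ih =>
    rw [sum_range_succ, ← sub_sub, ih]
    field_simp
    ring

theorem pow_mul_exp_neg_mul_le_s10 {c x : ℝ} (hc : 0 < c) (hx : 0 ≤ x) (N : ℕ) :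
    x ^ N * Real.exp (-(c * x)) ≤ N.factorial / c ^ N := by
  have h := Real.pow_div_factorial_le_exp (c * x) (by positivity) N
  rw [div_le_iff₀ (by positivity), mul_pow] at h
  rw [Real.exp_neg, le_div_iff₀ (by positivity)]
  calc x ^ N * (Real.exp (c * x))⁻¹ * c ^ N = (Real.exp (c * x))⁻¹ * (c ^ N * x ^ N) := by ring
    _ ≤ (Real.exp (c * x))⁻¹ * (Real.exp (c * x) * N.factorial) := by gcongr
    _ = N.factorial := by field_simp

theorem summable_exp_mul_of_tendsto_div_rpow {μ : ℕ → ℝ} {p L s : ℝ} (hp : 0 < p) (hL : 0 < L)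
    (hμ : Tendsto (fun n : ℕ => μ n / ((n : ℝ) + 1) ^ p) atTop (𝓝 L)) (hs : s < 0) :
    Summable fun n => Real.exp (s * μ n) := by
  set u : ℕ → ℝ := fun n => ((n : ℝ) + 1) ^ p
  have hu : Tendsto u atTop atTop :=
    (tendsto_rpow_atTop hp).comp (tendsto_atTop_add_const_right _ 1 tendsto_natCast_atTop_atTop)
  have hlower : ∀ᶠ n in atTop, L / 2 * u n ≤ μ n := by
    filter_upwards [hμ.eventually_const_le (half_lt_self hL)] with n hn
    rwa [le_div_iff₀ (by positivity)] at hn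
  have hsq : Summable fun n : ℕ => ((n : ℝ) + 1) ^ (-2 : ℝ) := by
    simpa using (summable_nat_add_iff 1).2 (Real.summable_nat_rpow.2 (by norm_num : (-2 : ℝ) < -1))
  refine summable_of_isBigO_nat hsq ?_
  calc (fun n => Real.exp (s * μ n))
      =O[atTop] fun n => Real.exp (-(-s * L / 2) * u n) := by
        refine Asymptotics.IsBigO.of_bound 1 ?_
        filter_upwards [hlower] with n hn
        simp only [Real.norm_eq_abs, Real.abs_exp, one_mul]
        exact Real.exp_le_exp.2 (by nlinarith)
    _ =O[atTop] fun n => u n ^ (-2 / p) :=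
        ((isLittleO_exp_neg_mul_rpow_atTop (by nlinarith) _).comp_tendsto hu).isBigO
    _ = fun n : ℕ => ((n : ℝ) + 1) ^ (-2 : ℝ) := by
        ext n
        rw [← Real.rpow_mul (by positivity), mul_div_cancel₀ _ hp.ne']

theorem cos_mul_norm_le_norm_add_ofReal {z : ℂ} {θ m t : ℝ} (hθ : |θ| ≤ m) (hm : m < π / 2)
    (hz : 0 < (z * Complex.exp (θ * Complex.I)).re) (ht : 0 ≤ t) :
    Real.cos m * ‖z‖ ≤ ‖z + t‖ := by
  have hm0 : 0 ≤ Real.cos m :=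
    Real.cos_nonneg_of_mem_Icc ⟨by linarith [abs_nonneg θ, Real.pi_pos], hm.le⟩
  rcases le_or_gt 0 z.re with hre | hre
  · calc Real.cos m * ‖z‖ ≤ ‖z‖ := mul_le_of_le_one_left (norm_nonneg _) (Real.cos_le_one m)
      _ ≤ ‖z + t‖ := by
        rw [Complex.norm_def, Complex.norm_def]
        gcongr
        simp only [Complex.normSq_apply, Complex.add_re, Complex.ofReal_re, Complex.add_im,
          Complex.ofReal_im, add_zero]
        nlinarith
  · -- For `Re z < 0` the sector condition forces `|Im z| ≥ cos m · ‖z‖`, and `Im (z + t) = Im z`.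
    have hcos : Real.cos m ≤ Real.cos θ := by
      rw [← Real.cos_abs θ]
      exact Real.cos_le_cos_of_nonneg_of_le_pi (abs_nonneg θ) (by linarith [Real.pi_pos]) hθ
    rw [Complex.mul_re, Complex.exp_ofReal_mul_I_re, Complex.exp_ofReal_mul_I_im] at hz
    have hsq : (z.re * Real.cos θ) ^ 2 ≤ (z.im * Real.sin θ) ^ 2 := by
      rw [← neg_sq, ← neg_sq (z.im * _)]
      exact pow_le_pow_left₀ (by nlinarith) (by linarith) 2
    have hkey : (Real.cos m * ‖z‖) ^ 2 ≤ z.im ^ 2 := by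
      rw [mul_pow, Complex.sq_norm, Complex.normSq_apply]
      nlinarith [Real.sin_sq_add_cos_sq θ, pow_le_pow_left₀ hm0 hcos 2, sq_nonneg z.re,
        sq_nonneg z.im]
    calc Real.cos m * ‖z‖ ≤ |z.im| := le_of_sq_le_sq (by rwa [sq_abs]) (abs_nonneg _)
      _ = |(z + t).im| := by simp
      _ ≤ ‖z + t‖ := Complex.abs_im_le_norm _

theorem norm_tsum_div_add_sub_sum_le {g μ : ℕ → ℂ} {z : ℂ} {κ : ℝ} (hκ : 0 < κ) (hz : z ≠ 0)
    (hden : ∀ n, κ * ‖z‖ ≤ ‖z + μ n‖) (hmom : ∀ i, Summable fun n => ‖g n * (-μ n) ^ i‖)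
    (N : ℕ) :
    ‖∑' n, g n / (z + μ n) - ∑ i ∈ Finset.range N, (∑' n, g n * (-μ n) ^ i) / z ^ (i + 1)‖ ≤
      (∑' n, ‖g n * (-μ n) ^ N‖) / (κ * ‖z‖ ^ (N + 1)) := by
  have hκz : 0 < κ * ‖z‖ := mul_pos hκ (norm_pos_iff.2 hz)
  have hne : ∀ n, z + μ n ≠ 0 := fun n => norm_pos_iff.1 (hκz.trans_le (hden n))
  have hsum : ∀ i, Summable fun n => g n * (-μ n) ^ i / z ^ (i + 1) :=
    fun i => (hmom i).of_norm.div_const _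
  have hF : Summable fun n => g n / (z + μ n) := by
    refine Summable.of_norm_bounded ((hmom 0).div_const (κ * ‖z‖)) fun n => ?_
    rw [norm_div, pow_zero, mul_one]
    gcongr
    exact hden n
  have hrem : ∀ n, ‖g n * (-μ n) ^ N / (z ^ N * (z + μ n))‖ ≤
      ‖g n * (-μ n) ^ N‖ / (κ * ‖z‖ ^ (N + 1)) := fun n => by
    rw [norm_div, norm_mul (z ^ N), norm_pow, pow_succ, mul_left_comm κ]
    gcongr
    exact hden n
  have hbound := (hmom N).div_const (κ * ‖z‖ ^ (N + 1))
  have hrem_summable := Summable.of_nonneg_of_le (fun _ => norm_nonneg _) hrem hbound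
  simp_rw [← tsum_div_const]
  rw [← Summable.tsum_finsetSum fun i _ => hsum i, ← hF.tsum_sub (summable_sum fun i _ => hsum i)]
  simp_rw [div_add_sub_sum_div_pow_eq _ z _ hz (hne _)]
  exact (norm_tsum_le_tsum_norm hrem_summable).trans (hrem_summable.tsum_le_tsum hrem hbound)

theorem norm_cexp_mul_mul_neg_pow_le {s x : ℝ} (hs : s < 0) (hx : 0 ≤ x) (i : ℕ) :
    ‖Complex.exp (s * x) * (-(x : ℂ)) ^ i‖ ≤ i.factorial / (-s / 2) ^ i * Real.exp (s / 2 * x) := by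
  rw [norm_mul, norm_pow, norm_neg, Complex.norm_real, Real.norm_of_nonneg hx, ← Complex.ofReal_mul,
    Complex.norm_exp_ofReal]
  calc Real.exp (s * x) * x ^ i = x ^ i * Real.exp (-(-s / 2 * x)) * Real.exp (s / 2 * x) := by
        rw [mul_assoc, ← Real.exp_add]; ring_nf
    _ ≤ i.factorial / (-s / 2) ^ i * Real.exp (s / 2 * x) := by
        gcongr
        exact pow_mul_exp_neg_mul_le_s10 (by linarith) hx i

theorem stmt_10_general (d : ℕ) (hd : 0 < d) (lam : ℕ → ℝ) (hpos : ∀ n, 0 < lam n)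
    (L : ℝ) (hL : 0 < L)
    (hweyl : Tendsto (fun n : ℕ => lam n / (((n : ℝ) + 1) ^ ((2 : ℝ) / (d : ℝ))))
      atTop (𝓝 L))
    (s0 : ℝ) (hs0 : s0 < 0) :
    (∀ i : ℕ, Summable fun n : ℕ =>
      ‖Complex.exp ((s0 : ℂ) * (lam n : ℂ)) * (-(lam n : ℂ)) ^ i‖) ∧
    ∀ A B : ℝ, -(π / 2) < A → A ≤ B → B < π / 2 →
      ∃ L₀ M : ℝ, 0 < L₀ ∧ 0 < M ∧
        ∀ N : ℕ, 1 ≤ N → ∀ lambda : ℂ,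
          (∃ θ ∈ Set.Icc A B, 0 < (lambda * Complex.exp ((θ : ℂ) * Complex.I)).re) →
          ‖(∑' n : ℕ, Complex.exp ((s0 : ℂ) * (lam n : ℂ)) / (lambda + (lam n : ℂ))) -
              ∑ i ∈ Finset.range N,
                (∑' n : ℕ, Complex.exp ((s0 : ℂ) * (lam n : ℂ)) * (-(lam n : ℂ)) ^ i) /
                  lambda ^ (i + 1)‖
            ≤ L₀ * M ^ N * (Nat.factorial N : ℝ) / ‖lambda‖ ^ (N + 1) := by
  have hS : Summable fun n => Real.exp (s0 / 2 * lam n) :=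
    summable_exp_mul_of_tendsto_div_rpow (div_pos two_pos (Nat.cast_pos.2 hd)) hL hweyl
      (by linarith)
  have hmom := fun i n => norm_cexp_mul_mul_neg_pow_le hs0 (hpos n).le i
  have hsum : ∀ i : ℕ, Summable fun n : ℕ =>
      ‖Complex.exp ((s0 : ℂ) * (lam n : ℂ)) * (-(lam n : ℂ)) ^ i‖ :=
    fun i => .of_nonneg_of_le (fun _ => norm_nonneg _) (hmom i) (hS.mul_left _)
  refine ⟨hsum, fun A B hA hAB hB => ?_⟩
  set m := max |A| |B|
  have hm : m < π / 2 := max_lt (abs_lt.2 ⟨hA, hAB.trans_lt hB⟩) (abs_lt.2 ⟨hA.trans_le hAB, hB⟩)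
  have hcos : 0 < Real.cos m :=
    Real.cos_pos_of_mem_Ioo ⟨by linarith [abs_nonneg A, le_max_left |A| |B|], hm⟩
  set S := ∑' n, Real.exp (s0 / 2 * lam n)
  have hSpos : 0 < S := hS.tsum_pos (fun _ => (Real.exp_pos _).le) 0 (Real.exp_pos _)
  refine ⟨S / Real.cos m, (-s0 / 2)⁻¹, by positivity, by simpa using hs0, ?_⟩
  rintro N - z ⟨θ, hθ, hz⟩
  have hz0 : z ≠ 0 := by rintro rfl; simp at hz
  have hden : ∀ n, Real.cos m * ‖z‖ ≤ ‖z + lam n‖ := fun n =>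
    cos_mul_norm_le_norm_add_ofReal (abs_le_max_abs_abs hθ.1 hθ.2) hm hz (hpos n).le
  calc _ ≤ (∑' n, ‖Complex.exp (s0 * lam n) * (-(lam n : ℂ)) ^ N‖) /
        (Real.cos m * ‖z‖ ^ (N + 1)) :=
        norm_tsum_div_add_sub_sum_le hcos hz0 hden hsum N
    _ ≤ (N.factorial / (-s0 / 2) ^ N * S) / (Real.cos m * ‖z‖ ^ (N + 1)) := by
        gcongr
        rw [← tsum_mul_left]
        exact (hsum N).tsum_le_tsum (hmom N) (hS.mul_left _)
    _ = _ := by rw [inv_pow]; ring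

/-- For `s₀ < 0`, each `a_i = Σ_{n≥1} e^{s₀ λ_n} (-λ_n)^i` converges
absolutely, and `F(λ) = Σ_{n≥1} e^{s₀ λ_n}/(λ + λ_n)` admits `Σ_{i≥0} a_i λ^{-i-1}` as
a uniform 1-Gevrey asymptotic expansion on the subsectors attached to each closed
subinterval `J = [A, B] ⊂ (-π/2, π/2)`: there are `L₀, M > 0` with
`|F(λ) - Σ_{i<N} a_i λ^{-i-1}| ≤ L₀ M^N N! |λ|^{-N-1}` for all `N ≥ 1` and all `λ`
in `⋃_{θ∈J} {Re(λ e^{iθ}) > 0}`. -/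
theorem stmt_10 (d : ℕ) (hd : 0 < d) (lam : ℕ → ℝ) (hpos : ∀ n, 0 < lam n)
    (hmono : Monotone lam) (L : ℝ) (hL : 0 < L)
    (hweyl : Tendsto (fun n : ℕ => lam n / (((n : ℝ) + 1) ^ ((2 : ℝ) / (d : ℝ))))
      atTop (𝓝 L))
    (s0 : ℝ) (hs0 : s0 < 0) :
    (∀ i : ℕ, Summable fun n : ℕ =>
      ‖Complex.exp ((s0 : ℂ) * (lam n : ℂ)) * (-(lam n : ℂ)) ^ i‖) ∧
    ∀ A B : ℝ, -(π / 2) < A → A ≤ B → B < π / 2 →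
      ∃ L₀ M : ℝ, 0 < L₀ ∧ 0 < M ∧
        ∀ N : ℕ, 1 ≤ N → ∀ lambda : ℂ,
          (∃ θ ∈ Set.Icc A B, 0 < (lambda * Complex.exp ((θ : ℂ) * Complex.I)).re) →
          ‖(∑' n : ℕ, Complex.exp ((s0 : ℂ) * (lam n : ℂ)) / (lambda + (lam n : ℂ))) -
              ∑ i ∈ Finset.range N,
                (∑' n : ℕ, Complex.exp ((s0 : ℂ) * (lam n : ℂ)) * (-(lam n : ℂ)) ^ i) /
                  lambda ^ (i + 1)‖
            ≤ L₀ * M ^ N * (Nat.factorial N : ℝ) / ‖lambda‖ ^ (N + 1) :=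
  stmt_10_general d hd lam hpos L hL hweyl s0 hs0
end

section
/- Let s_0 < 0 be real. Suppose h : ℂ → ℂ satisfies: (i) there exists η with 0 < η < |s_0| such that h is holomorphic on the strip {ρ : |Im ρ| < 2η}; (ii) there exists δ > 0 such that |h(ρ)| = O(|ρ|^{−1−δ}) as Re ρ → −∞, uniformly for Im ρ ∈ (−2η, 2η); (iii) there exists δ′ < s_0 such that |h(ρ)| = O(e^{δ′ |ρ|}) as Re ρ → +∞, uniformly for Im ρ ∈ (−2η, 2η). Then both series below converge and Σ_{n∈ℤ} h(n) e^{−s_0 n} = 2π Σ_{m∈ℤ} ĥ(2πm + i s_0), where ĥ(τ) = (1/2π) ∫_{−∞}^{∞} h(ρ) e^{iτρ} dρ is the Fourier transform of h. -/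
/-!
Multiplying by `e^{-s₀ρ}` turns `h` into a function `G` that is holomorphic on the strip and
decays like `e^{-c|Re ρ|}` there, with `c = min (-s₀) (s₀ - δ')`: towards `-∞` the factor
`e^{-s₀ρ}` decays while `h` stays bounded, towards `+∞` the bound on `h` beats its growth.
Cauchy's estimates pass this decay on to `G'` and `G''`, so two integrations by parts show that
the Fourier transform of `G` on `ℝ` is `O(|ξ|⁻²)`, and Poisson summation applies to `G`.
Finally `ĥ(2πm + is₀)` is `1/2π` times the Fourier transform of `G` at `-m`, in Mathlib's
normalisation `𝓕 f ξ = ∫ e^{-2πixξ} f x dx`.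
-/

open Filter MeasureTheory Set
open scoped Real FourierTransform

lemma integrable_exp_mul_abs {c : ℝ} (hc : c < 0) :
    Integrable fun x : ℝ => Real.exp (c * |x|) := by
  refine Integrable.of_integral_ne_zero ?_
  rw [integral_comp_abs (f := fun x => Real.exp (c * x)), integral_exp_mul_Ioi hc, mul_zero,
    Real.exp_zero]
  exact mul_ne_zero two_ne_zero (div_ne_zero (neg_ne_zero.mpr one_ne_zero) hc.ne)

lemma integrable_of_norm_le_exp_neg_mul_abs {f : ℝ → ℂ} {c A : ℝ} (hc : 0 < c)
    (hf : AEStronglyMeasurable f) (hbound : ∀ x, ‖f x‖ ≤ A * Real.exp (-c * |x|)) :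
    Integrable f :=
  ((integrable_exp_mul_abs (neg_neg_of_pos hc)).const_mul A).mono' hf (ae_of_all _ hbound)

lemma isBigO_rpow_neg_of_norm_le_exp_neg_mul_abs {f : ℝ → ℂ} {c A : ℝ} (hc : 0 < c)
    (hbound : ∀ x, ‖f x‖ ≤ A * Real.exp (-c * |x|)) (b : ℝ) :
    f =O[cocompact ℝ] (|·| ^ (-b)) := by
  have hexp : (fun x : ℝ => Real.exp (-c * |x|)) =O[cocompact ℝ] (|·| ^ (-b)) :=
    (isLittleO_exp_neg_mul_rpow_atTop hc (-b)).isBigO.comp_tendsto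
      tendsto_norm_cocompact_atTop
  refine (Asymptotics.IsBigO.of_bound A (Eventually.of_forall fun x => ?_)).trans hexp
  simpa [Real.norm_eq_abs, abs_of_pos (Real.exp_pos _)] using hbound x

lemma fourier_isBigO_rpow_neg_two {g g' g'' : ℝ → ℂ}
    (hg : ∀ x, HasDerivAt g (g' x) x) (hg' : ∀ x, HasDerivAt g' (g'' x) x)
    (hgi : Integrable g) (hg'i : Integrable g') (hg''i : Integrable g'') :
    𝓕 g =O[cocompact ℝ] (|·| ^ (-2 : ℝ)) := by
  have hderiv : deriv g = g' := funext fun x => (hg x).deriv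
  have hderiv' : deriv g' = g'' := funext fun x => (hg' x).deriv
  have hF' : 𝓕 g' = fun ξ : ℝ => (2 * π * Complex.I * ξ) • 𝓕 g ξ := by
    rw [← hderiv]
    exact Real.fourier_deriv hgi (fun x => (hg x).differentiableAt) (hderiv ▸ hg'i)
  have hF'' : 𝓕 g'' = fun ξ : ℝ => (2 * π * Complex.I * ξ) • 𝓕 g' ξ := by
    rw [← hderiv']
    exact Real.fourier_deriv hg'i (fun x => (hg' x).differentiableAt) (hderiv' ▸ hg''i)
  set M := ∫ x, ‖g'' x‖
  refine Asymptotics.IsBigO.of_bound (M / (2 * π) ^ 2) ?_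
  filter_upwards [tendsto_norm_cocompact_atTop.eventually_ne_atTop 0] with ξ hξ
  have hnorm : ‖2 * π * Complex.I * ξ‖ = 2 * π * |ξ| := by
    simp [Real.pi_pos.le, abs_of_nonneg]
  have hkey : (2 * π * |ξ|) ^ 2 * ‖𝓕 g ξ‖ ≤ M := by
    calc (2 * π * |ξ|) ^ 2 * ‖𝓕 g ξ‖ = ‖𝓕 g'' ξ‖ := by
          rw [hF'', hF', norm_smul, norm_smul, hnorm]; ring
      _ ≤ M := VectorFourier.norm_fourierIntegral_le_integral_norm _ _ _ _ _
  have hξ' : 0 < |ξ| := abs_pos.mpr (norm_ne_zero_iff.mp hξ)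
  rw [Real.norm_of_nonneg (by positivity), Real.rpow_neg hξ'.le, Real.rpow_two,
    ← div_eq_mul_inv, div_div, le_div_iff₀ (by positivity)]
  linarith

lemma tsum_eq_tsum_fourier_of_exp_decay {g g' g'' : ℝ → ℂ} {c A₀ A₁ A₂ : ℝ} (hc : 0 < c)
    (hg : ∀ x, HasDerivAt g (g' x) x) (hg' : ∀ x, HasDerivAt g' (g'' x) x)
    (hb₀ : ∀ x, ‖g x‖ ≤ A₀ * Real.exp (-c * |x|)) (hb₁ : ∀ x, ‖g' x‖ ≤ A₁ * Real.exp (-c * |x|))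
    (hb₂ : ∀ x, ‖g'' x‖ ≤ A₂ * Real.exp (-c * |x|)) :
    Summable (fun n : ℤ => g n) ∧ Summable (fun n : ℤ => 𝓕 g n) ∧
      ∑' n : ℤ, g n = ∑' n : ℤ, 𝓕 g n := by
  have hgc : Continuous g := continuous_iff_continuousAt.mpr fun x => (hg x).continuousAt
  have hg'c : Continuous g' := continuous_iff_continuousAt.mpr fun x => (hg' x).continuousAt
  have hg'' : g'' = deriv g' := funext fun x => (hg' x).deriv.symm
  have hgO := isBigO_rpow_neg_of_norm_le_exp_neg_mul_abs hc hb₀ 2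
  have hFO := fourier_isBigO_rpow_neg_two hg hg'
    (integrable_of_norm_le_exp_neg_mul_abs hc hgc.aestronglyMeasurable hb₀)
    (integrable_of_norm_le_exp_neg_mul_abs hc hg'c.aestronglyMeasurable hb₁)
    (integrable_of_norm_le_exp_neg_mul_abs hc
      (hg'' ▸ (measurable_deriv g').aestronglyMeasurable) hb₂)
  have hsummable {f : ℝ → ℂ} (hf : f =O[cocompact ℝ] (|·| ^ (-2 : ℝ))) :
      Summable fun n : ℤ => f n :=
    summable_of_isBigO (Real.summable_abs_int_rpow one_lt_two)
      (hf.comp_tendsto Int.tendsto_coe_cofinite)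
  refine ⟨hsummable hgO, hsummable hFO, ?_⟩
  simpa using Real.tsum_eq_tsum_fourier_of_rpow_decay hgc one_lt_two hgO hFO 0

def horizontalStrip (b : ℝ) : Set ℂ := {ζ : ℂ | |ζ.im| < b}

lemma isOpen_horizontalStrip (b : ℝ) : IsOpen (horizontalStrip b) :=
  isOpen_lt (by fun_prop) continuous_const

lemma horizontalStrip_mono {b b' : ℝ} (h : b ≤ b') : horizontalStrip b ⊆ horizontalStrip b' :=
  fun _ hζ => lt_of_lt_of_le hζ h

lemma ofReal_mem_horizontalStrip {b : ℝ} (hb : 0 < b) (x : ℝ) : (x : ℂ) ∈ horizontalStrip b := by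
  simpa [horizontalStrip] using hb

def IsExpDecayOnStrip (F : ℂ → ℂ) (b c A : ℝ) : Prop :=
  ∀ ζ ∈ horizontalStrip b, ‖F ζ‖ ≤ A * Real.exp (-c * |ζ.re|)

namespace IsExpDecayOnStrip

variable {F : ℂ → ℂ} {b c A : ℝ}

lemma norm_ofReal_le (hF : IsExpDecayOnStrip F b c A) (hb : 0 < b) (x : ℝ) :
    ‖F x‖ ≤ A * Real.exp (-c * |x|) := by
  simpa using hF x (ofReal_mem_horizontalStrip hb x)

/-- Cauchy's estimate on the circles of radius `r` centred in the narrower strip. -/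
lemma deriv (hdecay : IsExpDecayOnStrip F b c A) (hF : DifferentiableOn ℂ F (horizontalStrip b))
    (hc : 0 ≤ c) {r : ℝ} (hr : 0 < r) :
    IsExpDecayOnStrip (deriv F) (b - r) c (A * Real.exp (c * r) / r) := by
  intro ζ hζ
  have hA : 0 ≤ A := nonneg_of_mul_nonneg_left
    ((norm_nonneg _).trans (hdecay ζ (horizontalStrip_mono (by linarith) hζ))) (Real.exp_pos _)
  have hball : Metric.closedBall ζ r ⊆ horizontalStrip b := by
    intro z hz
    have him : |z.im - ζ.im| ≤ r :=
      (Complex.abs_im_le_norm (z - ζ)).trans (by simpa [Complex.dist_eq] using hz)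
    have : |z.im| - |ζ.im| ≤ |z.im - ζ.im| := abs_sub_abs_le_abs_sub _ _
    show |z.im| < b
    linarith [show |ζ.im| < b - r from hζ]
  have hsphere : ∀ z ∈ Metric.sphere ζ r,
      ‖F z‖ ≤ A * Real.exp (c * r) * Real.exp (-c * |ζ.re|) := by
    intro z hz
    have hre : |ζ.re| - r ≤ |z.re| := by
      have : |z.re - ζ.re| ≤ r := (Complex.abs_re_le_norm (z - ζ)).trans
        (by simp [← Complex.dist_eq, Metric.mem_sphere.mp hz])
      linarith [abs_sub_abs_le_abs_sub ζ.re z.re, abs_sub_comm ζ.re z.re]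
    calc ‖F z‖ ≤ A * Real.exp (-c * |z.re|) :=
          hdecay z (hball (Metric.sphere_subset_closedBall hz))
      _ ≤ A * Real.exp (c * r + -c * |ζ.re|) := by gcongr; nlinarith
      _ = A * Real.exp (c * r) * Real.exp (-c * |ζ.re|) := by rw [Real.exp_add, mul_assoc]
  calc ‖_root_.deriv F ζ‖ ≤ A * Real.exp (c * r) * Real.exp (-c * |ζ.re|) / r :=
        Complex.norm_deriv_le_of_forall_mem_sphere_norm_le hr (hF.diffContOnCl_ball hball) hsphere
    _ = A * Real.exp (c * r) / r * Real.exp (-c * |ζ.re|) := by ring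

end IsExpDecayOnStrip

lemma exists_isExpDecayOnStrip_of_tails {F : ℂ → ℂ} {b b' c B C : ℝ} (hb' : b' < b)
    (hc : 0 ≤ c) (hF : ContinuousOn F (horizontalStrip b))
    (htail : ∀ ζ ∈ horizontalStrip b, B ≤ |ζ.re| → ‖F ζ‖ ≤ C * Real.exp (-c * |ζ.re|)) :
    ∃ A, IsExpDecayOnStrip F b' c A := by
  set K := Icc (-B) B ×ℂ Icc (-b') b'
  have hKsub : K ⊆ horizontalStrip b := fun ζ hζ =>
    (abs_le.mpr (Complex.mem_reProdIm.mp hζ).2).trans_lt hb'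
  obtain ⟨M, hM⟩ := (isCompact_Icc.reProdIm isCompact_Icc).exists_bound_of_continuousOn
    (hF.mono hKsub)
  refine ⟨max C (M * Real.exp (c * B)), fun ζ hζ => ?_⟩
  rcases le_or_gt B |ζ.re| with hre | hre
  · exact (htail ζ (horizontalStrip_mono hb'.le hζ) hre).trans
      (by gcongr; exact le_max_left _ _)
  · have hζK : ζ ∈ K := Complex.mem_reProdIm.mpr ⟨abs_le.mp hre.le, abs_le.mp (le_of_lt hζ)⟩
    have hM0 : 0 ≤ M := (norm_nonneg _).trans (hM ζ hζK)
    calc ‖F ζ‖ ≤ M * 1 := by simpa using hM ζ hζK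
      _ ≤ M * (Real.exp (c * B) * Real.exp (-c * |ζ.re|)) := by
          gcongr
          rw [← Real.exp_add, Real.one_le_exp_iff]
          nlinarith
      _ ≤ max C (M * Real.exp (c * B)) * Real.exp (-c * |ζ.re|) := by
          rw [← mul_assoc]; gcongr; exact le_max_right _ _

lemma norm_exp_neg_ofReal_mul (s : ℝ) (ζ : ℂ) :
    ‖Complex.exp (-(s : ℂ) * ζ)‖ = Real.exp (-s * ζ.re) := by
  simp [Complex.norm_exp]

lemma norm_mul_exp_le_of_rpow_bound {h : ℂ → ℂ} {s c p C : ℝ} {ζ : ℂ} (hcs : c ≤ -s)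
    (hp : p ≤ 0) (hC : 0 ≤ C) (hζ : ζ.re ≤ -1) (hh : ‖h ζ‖ ≤ C * ‖ζ‖ ^ p) :
    ‖h ζ * Complex.exp (-(s : ℂ) * ζ)‖ ≤ C * Real.exp (-c * |ζ.re|) := by
  have hζ1 : 1 ≤ ‖ζ‖ := by linarith [Complex.abs_re_le_norm ζ, abs_of_neg (by linarith : ζ.re < 0)]
  have hhC : ‖h ζ‖ ≤ C :=
    hh.trans (mul_le_of_le_one_right hC (Real.rpow_le_one_of_one_le_of_nonpos hζ1 hp))
  rw [norm_mul, norm_exp_neg_ofReal_mul, abs_of_neg (by linarith : ζ.re < 0)]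
  exact mul_le_mul hhC (Real.exp_le_exp.mpr (by nlinarith)) (Real.exp_pos _).le hC

lemma norm_mul_exp_le_of_exp_bound {h : ℂ → ℂ} {s c δ' C : ℝ} {ζ : ℂ} (hcs : c ≤ s - δ')
    (hδ' : δ' ≤ 0) (hC : 0 ≤ C) (hζ : 0 ≤ ζ.re) (hh : ‖h ζ‖ ≤ C * Real.exp (δ' * ‖ζ‖)) :
    ‖h ζ * Complex.exp (-(s : ℂ) * ζ)‖ ≤ C * Real.exp (-c * |ζ.re|) := by
  have hhC : ‖h ζ‖ ≤ C * Real.exp (δ' * ζ.re) :=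
    hh.trans (mul_le_mul_of_nonneg_left
      (Real.exp_le_exp.mpr (mul_le_mul_of_nonpos_left (Complex.re_le_norm ζ) hδ')) hC)
  rw [norm_mul, norm_exp_neg_ofReal_mul, abs_of_nonneg hζ]
  calc ‖h ζ‖ * Real.exp (-s * ζ.re) ≤ C * Real.exp (δ' * ζ.re) * Real.exp (-s * ζ.re) := by
        gcongr
    _ = C * Real.exp ((δ' - s) * ζ.re) := by rw [mul_assoc, ← Real.exp_add]; ring_nf
    _ ≤ C * Real.exp (-c * ζ.re) := by gcongr; nlinarith

lemma exists_isExpDecayOnStrip_mul_exp {h : ℂ → ℂ} {s b b' p δ' : ℝ} (hs : s < 0) (hp : p ≤ 0)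
    (hδ' : δ' < s) (hb' : b' < b) (hh : ContinuousOn h (horizontalStrip b))
    (hleft : ∃ C R : ℝ, 0 < C ∧ ∀ ρ : ℂ, ρ.re ≤ -R → |ρ.im| < b → ‖h ρ‖ ≤ C * ‖ρ‖ ^ p)
    (hright : ∃ C R : ℝ, 0 < C ∧ ∀ ρ : ℂ, R ≤ ρ.re → |ρ.im| < b →
      ‖h ρ‖ ≤ C * Real.exp (δ' * ‖ρ‖)) :
    ∃ c > 0, ∃ A, IsExpDecayOnStrip (fun ρ => h ρ * Complex.exp (-(s : ℂ) * ρ)) b' c A := by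
  obtain ⟨C₁, R₁, hC₁, hleft⟩ := hleft
  obtain ⟨C₂, R₂, hC₂, hright⟩ := hright
  set B := max (max R₁ 1) (max R₂ 0)
  have hR₁ : R₁ ≤ B := (le_max_left _ _).trans (le_max_left _ _)
  have hB₁ : 1 ≤ B := (le_max_right _ _).trans (le_max_left _ _)
  have hR₂ : R₂ ≤ B := (le_max_left _ _).trans (le_max_right _ _)
  have hB₀ : 0 ≤ B := (le_max_right _ _).trans (le_max_right _ _)
  have hc : 0 < min (-s) (s - δ') := lt_min (by linarith) (by linarith)
  refine ⟨_, hc, exists_isExpDecayOnStrip_of_tails (B := B) (C := max C₁ C₂) hb' hc.le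
    (hh.mul (by fun_prop)) fun ζ hζ hre => ?_⟩
  rcases le_abs'.mp hre with hre | hre
  · exact (norm_mul_exp_le_of_rpow_bound (min_le_left _ _) hp hC₁.le (by linarith)
      (hleft ζ (by linarith) hζ)).trans (by gcongr; exact le_max_left _ _)
  · exact (norm_mul_exp_le_of_exp_bound (min_le_right _ _) (by linarith) hC₂.le (by linarith)
      (hright ζ (by linarith) hζ)).trans (by gcongr; exact le_max_right _ _)

lemma tsum_eq_tsum_fourier_of_isExpDecayOnStrip {F : ℂ → ℂ} {b c A : ℝ} (hb : 0 < b)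
    (hc : 0 < c) (hF : DifferentiableOn ℂ F (horizontalStrip b))
    (hdecay : IsExpDecayOnStrip F b c A) :
    Summable (fun n : ℤ => F n) ∧ Summable (fun n : ℤ => 𝓕 (fun x : ℝ => F x) n) ∧
      ∑' n : ℤ, F n = ∑' n : ℤ, 𝓕 (fun x : ℝ => F x) n := by
  have hF' : DifferentiableOn ℂ (deriv F) (horizontalStrip b) :=
    (hF.analyticOnNhd (isOpen_horizontalStrip b)).deriv.differentiableOn
  have hdecay' := hdecay.deriv hF hc.le (half_pos hb)
  have hdecay'' := hdecay'.deriv (hF'.mono (horizontalStrip_mono (by linarith))) hc.le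
    (by positivity : 0 < b / 4)
  have hasDerivAt_ofReal {G : ℂ → ℂ} (hG : DifferentiableOn ℂ G (horizontalStrip b)) (x : ℝ) :
      HasDerivAt (fun y : ℝ => G y) (deriv G x) x :=
    (hG.differentiableAt ((isOpen_horizontalStrip b).mem_nhds
      (ofReal_mem_horizontalStrip hb x))).hasDerivAt.comp_ofReal
  simpa only [Complex.ofReal_intCast] using tsum_eq_tsum_fourier_of_exp_decay hc
    (hasDerivAt_ofReal hF) (hasDerivAt_ofReal hF') (hdecay.norm_ofReal_le hb)
    (hdecay'.norm_ofReal_le (by linarith)) (hdecay''.norm_ofReal_le (by linarith))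

lemma integral_mul_exp_eq_fourier (h : ℂ → ℂ) (s ξ : ℝ) :
    ∫ x : ℝ, h x * Complex.exp (Complex.I * (2 * π * ξ + Complex.I * s) * x)
      = 𝓕 (fun x : ℝ => h x * Complex.exp (-(s : ℂ) * x)) (-ξ) := by
  rw [Real.fourier_real_eq_integral_exp_smul]
  congr 1 with x
  rw [smul_eq_mul, mul_left_comm, ← Complex.exp_add]
  congr 2
  push_cast
  linear_combination (s * x : ℂ) * Complex.I_sq

theorem stmt_14_general (s0 : ℝ) (hs0 : s0 < 0) (h : ℂ → ℂ)
    (η : ℝ) (hη : 0 < η)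
    (hhol : DifferentiableOn ℂ h {ρ : ℂ | |ρ.im| < 2 * η})
    (δ : ℝ) (hδ : 0 < δ)
    (hleft : ∃ C R : ℝ, 0 < C ∧ ∀ ρ : ℂ, ρ.re ≤ -R → |ρ.im| < 2 * η →
      ‖h ρ‖ ≤ C * ‖ρ‖ ^ (-(1 : ℝ) - δ))
    (δ' : ℝ) (hδ' : δ' < s0)
    (hright : ∃ C R : ℝ, 0 < C ∧ ∀ ρ : ℂ, R ≤ ρ.re → |ρ.im| < 2 * η →
      ‖h ρ‖ ≤ C * Real.exp (δ' * ‖ρ‖)) :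
    Summable (fun n : ℤ => h (n : ℂ) * Complex.exp (-(s0 : ℂ) * (n : ℂ))) ∧
    Summable (fun m : ℤ =>
      (1 / (2 * (π : ℂ))) *
        ∫ x : ℝ, h (x : ℂ) *
          Complex.exp (Complex.I * (2 * (π : ℂ) * (m : ℂ) + Complex.I * (s0 : ℂ)) * (x : ℂ))) ∧
    ∑' n : ℤ, h (n : ℂ) * Complex.exp (-(s0 : ℂ) * (n : ℂ))
      = 2 * (π : ℂ) *
          ∑' m : ℤ,
            (1 / (2 * (π : ℂ))) *
              ∫ x : ℝ, h (x : ℂ) *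
                Complex.exp (Complex.I * (2 * (π : ℂ) * (m : ℂ) + Complex.I * (s0 : ℂ)) * (x : ℂ)) := by
  obtain ⟨c, hc, A, hdecay⟩ := exists_isExpDecayOnStrip_mul_exp hs0 (by linarith) hδ'
    (by linarith : η < 2 * η) hhol.continuousOn hleft hright
  obtain ⟨hsum, hsumF, hpoisson⟩ := tsum_eq_tsum_fourier_of_isExpDecayOnStrip
    (F := fun ρ => h ρ * Complex.exp (-(s0 : ℂ) * ρ)) hη hc
    ((hhol.mono (horizontalStrip_mono (by linarith))).mul (by fun_prop)) hdecay
  have hident (m : ℤ) : ∫ x : ℝ, h x *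
      Complex.exp (Complex.I * (2 * (π : ℂ) * m + Complex.I * s0) * x) =
      𝓕 (fun x : ℝ => h x * Complex.exp (-(s0 : ℂ) * x)) (-m : ℤ) := by
    rw [Int.cast_neg, ← integral_mul_exp_eq_fourier]
    push_cast
    rfl
  simp_rw [hident]
  refine ⟨hsum, ((Equiv.neg ℤ).summable_iff.mpr hsumF).mul_left _, ?_⟩
  rw [tsum_mul_left, ← mul_assoc, mul_one_div_cancel (by simp [Real.pi_ne_zero]), one_mul,
    hpoisson, ← (Equiv.neg ℤ).tsum_eq]
  rfl

/-- Deformed Poisson summation formula: Let `s₀ < 0` and let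
`h : ℂ → ℂ` be holomorphic on the strip `{|Im ρ| < 2η}` for some `0 < η < |s₀|`,
with `|h(ρ)| = O(|ρ|^{-1-δ})` as `Re ρ → -∞` and `|h(ρ)| = O(e^{δ' |ρ|})` as
`Re ρ → +∞` (uniformly on the strip), for some `δ > 0` and `δ' < s₀`.  Then
`Σ_{n∈ℤ} h(n) e^{-s₀ n} = 2π Σ_{m∈ℤ} ĥ(2πm + i s₀)`, both series converging,
where `ĥ(τ) = (1/2π) ∫_ℝ h(ρ) e^{iτρ} dρ`. -/
theorem stmt_14 (s0 : ℝ) (hs0 : s0 < 0) (h : ℂ → ℂ)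
    (η : ℝ) (hη : 0 < η) (hη2 : η < |s0|)
    (hhol : DifferentiableOn ℂ h {ρ : ℂ | |ρ.im| < 2 * η})
    (δ : ℝ) (hδ : 0 < δ)
    (hleft : ∃ C R : ℝ, 0 < C ∧ ∀ ρ : ℂ, ρ.re ≤ -R → |ρ.im| < 2 * η →
      ‖h ρ‖ ≤ C * ‖ρ‖ ^ (-(1 : ℝ) - δ))
    (δ' : ℝ) (hδ' : δ' < s0)
    (hright : ∃ C R : ℝ, 0 < C ∧ ∀ ρ : ℂ, R ≤ ρ.re → |ρ.im| < 2 * η →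
      ‖h ρ‖ ≤ C * Real.exp (δ' * ‖ρ‖)) :
    Summable (fun n : ℤ => h (n : ℂ) * Complex.exp (-(s0 : ℂ) * (n : ℂ))) ∧
    Summable (fun m : ℤ =>
      (1 / (2 * (π : ℂ))) *
        ∫ x : ℝ, h (x : ℂ) *
          Complex.exp (Complex.I * (2 * (π : ℂ) * (m : ℂ) + Complex.I * (s0 : ℂ)) * (x : ℂ))) ∧
    ∑' n : ℤ, h (n : ℂ) * Complex.exp (-(s0 : ℂ) * (n : ℂ))
      = 2 * (π : ℂ) *
          ∑' m : ℤ,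
            (1 / (2 * (π : ℂ))) *
              ∫ x : ℝ, h (x : ℂ) *
                Complex.exp (Complex.I * (2 * (π : ℂ) * (m : ℂ) + Complex.I * (s0 : ℂ)) * (x : ℂ)) :=
  stmt_14_general s0 hs0 h η hη hhol δ hδ hleft δ' hδ' hright
end

section
/- Let d be a positive integer and (λ_n)_{n≥1} a nondecreasing sequence of positive real numbers with λ_n/n^{2/d} → L as n → ∞ for some L > 0; set ρ_n = √λ_n. For s_0 < 0 define F_{s_0}(ρ) = Σ_{n≥1} 2ρ e^{s_0 ρ_n} / (ρ² + ρ_n²), a holomorphic function on ℂ ∖ {±iρ_n : n ≥ 1}. Then for every integer m ≥ d and every complex ρ with Re ρ > 0, the termwise m-th derivative series Σ_{n≥1} (d^m/dρ^m)[2ρ/(ρ² + ρ_n²)] converges absolutely and lim_{s_0 → 0⁻} F_{s_0}^{(m)}(ρ) = Σ_{n≥1} (d^m/dρ^m)[2ρ/(ρ² + ρ_n²)], where F_{s_0}^{(m)} denotes the m-th complex derivative of F_{s_0}. -/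
open Filter MeasureTheory Set
open scoped Topology Real

/-!
For `Re z > 0` the partial fraction decomposition `2z/(z² + a²) = (z - ia)⁻¹ + (z + ia)⁻¹`
gives the `m`-th derivative in closed form, `(-1)ᵐ m! ((z - ia)⁻ᵐ⁻¹ + (z + ia)⁻ᵐ⁻¹)`, which is
`O(a⁻ᵐ⁻¹)`. The Weyl law makes `ρₙ` grow like `n^{1/d}`, so these derivatives are summable once
`m ≥ d`, and `Σ e^{s₀ρₙ}` converges for every `s₀ < 0`. The latter dominates the series of
`F_{s₀}` uniformly near `ρ`, so by Weierstrass' theorem it may be differentiated termwise; as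
`|e^{s₀ρₙ}| ≤ 1`, dominated convergence then lets `s₀ → 0⁻`.
-/

open Complex Nat

theorem sq_add_sq_eq_mul (z a : ℂ) : z ^ 2 + a ^ 2 = (z - a * I) * (z + a * I) := by
  ring_nf
  rw [I_sq]
  ring

theorem two_mul_div_sq_add_sq {z a : ℂ} (h₁ : z - a * I ≠ 0) (h₂ : z + a * I ≠ 0) :
    2 * z / (z ^ 2 + a ^ 2) = (z - a * I)⁻¹ + (z + a * I)⁻¹ := by
  rw [sq_add_sq_eq_mul]
  field_simp
  ring

theorem iteratedDeriv_inv_sub {𝕜 : Type*} [NontriviallyNormedField 𝕜] (n : ℕ) (c z : 𝕜) :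
    iteratedDeriv n (fun w => (w - c)⁻¹) z = (-1) ^ n * n ! * (z - c) ^ (-1 - n : ℤ) := by
  rw [iteratedDeriv_comp_sub_const n Inv.inv c, iteratedDeriv_eq_iterate]
  exact iter_deriv_inv n (z - c)

theorem iteratedDeriv_two_mul_div_sq_add_sq {z a : ℂ} (h₁ : z - a * I ≠ 0)
    (h₂ : z + a * I ≠ 0) (n : ℕ) :
    iteratedDeriv n (fun w => 2 * w / (w ^ 2 + a ^ 2)) z =
      (-1) ^ n * n ! * ((z - a * I) ^ (-1 - n : ℤ) + (z + a * I) ^ (-1 - n : ℤ)) := by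
  have heq : (fun w => 2 * w / (w ^ 2 + a ^ 2)) =ᶠ[𝓝 z]
      fun w => (w - a * I)⁻¹ + (w - -(a * I))⁻¹ := by
    filter_upwards [(continuous_sub_right (a * I)).continuousAt.eventually_ne h₁,
      (continuous_add_const (a * I)).continuousAt.eventually_ne h₂] with w hw₁ hw₂
    rw [sub_neg_eq_add, two_mul_div_sq_add_sq hw₁ hw₂]
  rw [heq.iteratedDeriv_eq, iteratedDeriv_fun_add, iteratedDeriv_inv_sub, iteratedDeriv_inv_sub,
    sub_neg_eq_add, mul_add]
  · exact (contDiffAt_id.sub contDiffAt_const).inv h₁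
  · exact (contDiffAt_id.sub contDiffAt_const).inv (by rwa [sub_neg_eq_add])

theorem sq_re_le_norm_sq_add_sq (z : ℂ) (a : ℝ) : z.re ^ 2 ≤ ‖z ^ 2 + (a : ℂ) ^ 2‖ := by
  have h₁ : |z.re| ≤ ‖z - a * I‖ := by simpa using abs_re_le_norm (z - a * I)
  have h₂ : |z.re| ≤ ‖z + a * I‖ := by simpa using abs_re_le_norm (z + a * I)
  rw [sq_add_sq_eq_mul, norm_mul, ← sq_abs, sq]
  exact mul_le_mul h₁ h₂ (abs_nonneg _) (norm_nonneg _)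

theorem half_abs_le_norm_add_mul_I {z : ℂ} {a : ℝ} (h : 2 * ‖z‖ ≤ |a|) :
    |a| / 2 ≤ ‖z + a * I‖ := by
  have : ‖(a : ℂ) * I‖ ≤ ‖z + a * I‖ + ‖z‖ := by
    simpa using norm_sub_le (z + a * I) z
  rw [norm_mul, norm_I, mul_one, norm_real, Real.norm_eq_abs] at this
  linarith

theorem add_mul_I_ne_zero_of_two_mul_norm_lt {z : ℂ} {a : ℝ} (h : 2 * ‖z‖ < |a|) :
    z + a * I ≠ 0 :=
  norm_pos_iff.1 <| (half_pos (h.trans_le' (by positivity))).trans_le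
    (half_abs_le_norm_add_mul_I h.le)

theorem norm_add_mul_I_zpow_le {z : ℂ} {a : ℝ} (h : 2 * ‖z‖ < |a|) (k : ℕ) :
    ‖(z + a * I) ^ (-1 - k : ℤ)‖ ≤ 2 ^ (k + 1) * |a| ^ (-(k + 1 : ℝ)) := by
  have ha : 0 < |a| / 2 := by linarith [norm_nonneg z]
  have hk : (-1 - k : ℤ) = -((k + 1 : ℕ) : ℤ) := by push_cast; ring
  have hk' : (-(k + 1 : ℝ)) = -((k + 1 : ℕ) : ℝ) := by push_cast; ring
  rw [hk, hk', zpow_neg, zpow_natCast, norm_inv, norm_pow, Real.rpow_neg (abs_nonneg a),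
    Real.rpow_natCast]
  calc (‖z + a * I‖ ^ (k + 1))⁻¹ ≤ ((|a| / 2) ^ (k + 1))⁻¹ :=
        inv_anti₀ (pow_pos ha _) (pow_le_pow_left₀ ha.le (half_abs_le_norm_add_mul_I h.le) _)
    _ = 2 ^ (k + 1) * (|a| ^ (k + 1))⁻¹ := by rw [div_pow, inv_div, div_eq_mul_inv]

section Weierstrass

variable {ι E : Type*} [NormedAddCommGroup E] [NormedSpace ℂ E] [CompleteSpace E]
  {U : Set ℂ}

theorem TendstoLocallyUniformlyOn.iterate_deriv {l : Filter ι} {F : ι → ℂ → E} {f : ℂ → E}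
    (hf : TendstoLocallyUniformlyOn F f l U) (hF : ∀ᶠ n in l, DifferentiableOn ℂ (F n) U)
    (hU : IsOpen U) (k : ℕ) :
    TendstoLocallyUniformlyOn (fun n => _root_.deriv^[k] (F n)) (_root_.deriv^[k] f) l U := by
  induction k with
  | zero => simpa using hf
  | succ k ih =>
    simp only [Function.iterate_succ_apply']
    refine ih.deriv (hF.mono fun n hn => ?_) hU
    exact ((hn.analyticOnNhd hU).iterated_deriv k).differentiableOn

theorem hasSum_iteratedDeriv_of_summable_norm {F : ι → ℂ → E} {u : ι → ℝ} (hu : Summable u)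
    (hf : ∀ i, DifferentiableOn ℂ (F i) U) (hU : IsOpen U)
    (hF_le : ∀ i, ∀ w ∈ U, ‖F i w‖ ≤ u i) (k : ℕ) {z : ℂ} (hz : z ∈ U) :
    HasSum (fun i => iteratedDeriv k (F i) z) (iteratedDeriv k (fun w => ∑' i, F i w) z) := by
  have hlim := ((tendstoUniformlyOn_tsum hu hF_le).tendstoLocallyUniformlyOn.iterate_deriv
    (Eventually.of_forall fun t => DifferentiableOn.fun_sum fun i _ => hf i) hU k).tendsto_at hz
  simp only [← iteratedDeriv_eq_iterate] at hlim
  refine hlim.congr fun t => iteratedDeriv_fun_sum fun i _ => ?_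
  exact ((hf i).contDiffOn hU).contDiffAt (hU.mem_nhds hz)

end Weierstrass

section Growth

variable {a : ℕ → ℝ} {c α : ℝ}

theorem eventually_sqrt_mul_rpow_le_sqrt_of_tendsto {L : ℝ} (hL : 0 < L)
    (h : Tendsto (fun n : ℕ => a n / ((n : ℝ) + 1) ^ α) atTop (𝓝 L)) :
    ∀ᶠ n : ℕ in atTop, √(L / 2) * ((n : ℝ) + 1) ^ (α / 2) ≤ √(a n) := by
  filter_upwards [h.eventually (eventually_gt_nhds (half_lt_self hL))] with n hn
  have hpos : (0 : ℝ) < ((n : ℝ) + 1) ^ α := by positivity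
  calc √(L / 2) * ((n : ℝ) + 1) ^ (α / 2) = √(L / 2 * ((n : ℝ) + 1) ^ α) := by
        rw [Real.sqrt_mul (by positivity), Real.sqrt_eq_rpow ((_ : ℝ) ^ α),
          ← Real.rpow_mul (by positivity)]
        ring_nf
    _ ≤ √(a n) := Real.sqrt_le_sqrt ((lt_div_iff₀ hpos).mp hn).le

theorem tendsto_atTop_of_eventually_mul_rpow_le (hc : 0 < c) (hα : 0 < α)
    (ha : ∀ᶠ n : ℕ in atTop, c * ((n : ℝ) + 1) ^ α ≤ a n) : Tendsto a atTop atTop :=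
  tendsto_atTop_mono' atTop ha <| ((tendsto_rpow_atTop hα).comp
    (tendsto_atTop_add_const_right atTop 1 tendsto_natCast_atTop_atTop)).const_mul_atTop hc

theorem summable_rpow_neg_of_eventually_mul_rpow_le {p : ℝ} (hc : 0 < c) (hp : 0 < p)
    (hαp : 1 < α * p) (ha : ∀ᶠ n : ℕ in atTop, c * ((n : ℝ) + 1) ^ α ≤ a n) :
    Summable fun n => a n ^ (-p) := by
  have hmajorant : Summable fun n : ℕ => c ^ (-p) * ((n : ℝ) + 1) ^ (-(α * p)) := by
    refine Summable.mul_left _ ?_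
    exact_mod_cast (summable_nat_add_iff 1).2 (Real.summable_nat_rpow.2 (by linarith))
  refine hmajorant.of_norm_bounded_eventually_nat ?_
  filter_upwards [ha] with n hn
  have hlow : 0 < c * ((n : ℝ) + 1) ^ α := by positivity
  calc ‖a n ^ (-p)‖ = a n ^ (-p) := Real.norm_of_nonneg (Real.rpow_nonneg (hlow.le.trans hn) _)
    _ ≤ (c * ((n : ℝ) + 1) ^ α) ^ (-p) := Real.rpow_le_rpow_of_nonpos hlow hn (by linarith)
    _ = c ^ (-p) * ((n : ℝ) + 1) ^ (-(α * p)) := by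
        rw [Real.mul_rpow hc.le (by positivity), ← Real.rpow_mul (by positivity), mul_neg]

theorem summable_exp_mul_of_summable_rpow_neg {p σ : ℝ} (hσ : σ < 0)
    (ha : Tendsto a atTop atTop) (hs : Summable fun n => a n ^ (-p)) :
    Summable fun n => Real.exp (σ * a n) := by
  refine summable_of_isBigO_nat hs ?_
  have := ((isLittleO_exp_neg_mul_rpow_atTop (neg_pos.2 hσ) (-p)).comp_tendsto ha).isBigO
  simpa only [neg_neg, Function.comp_def] using this

end Growth

section TermwiseDerivative

variable {r : ℕ → ℝ} {z : ℂ}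

theorem summable_norm_iteratedDeriv_two_mul_div (m : ℕ) (hr : Tendsto r atTop atTop)
    (hs : Summable fun n => r n ^ (-(m + 1 : ℝ))) :
    Summable fun n => ‖iteratedDeriv m (fun w => 2 * w / (w ^ 2 + (r n : ℂ) ^ 2)) z‖ := by
  refine (hs.mul_left ((m ! : ℝ) * 2 ^ (m + 2))).of_norm_bounded_eventually_nat ?_
  filter_upwards [hr.eventually_gt_atTop (2 * ‖z‖)] with n hn
  have hpos : 0 < r n := hn.trans_le' (by positivity)
  have hsub : z - r n * I = z + ((-r n : ℝ) : ℂ) * I := by push_cast; ring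
  have hlt₁ : 2 * ‖z‖ < |-r n| := by rwa [abs_neg, abs_of_pos hpos]
  have hlt₂ : 2 * ‖z‖ < |r n| := by rwa [abs_of_pos hpos]
  have h₁ := norm_add_mul_I_zpow_le hlt₁ m
  have h₂ := norm_add_mul_I_zpow_le hlt₂ m
  rw [← hsub, abs_neg, abs_of_pos hpos] at h₁
  rw [abs_of_pos hpos] at h₂
  rw [norm_norm, iteratedDeriv_two_mul_div_sq_add_sq
      (hsub ▸ add_mul_I_ne_zero_of_two_mul_norm_lt hlt₁)
      (add_mul_I_ne_zero_of_two_mul_norm_lt hlt₂),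
    norm_mul, norm_mul, norm_pow, norm_neg, norm_one, one_pow, one_mul, norm_natCast]
  calc (m ! : ℝ) * ‖(z - r n * I) ^ (-1 - m : ℤ) + (z + r n * I) ^ (-1 - m : ℤ)‖
      ≤ m ! * (2 ^ (m + 1) * r n ^ (-(m + 1 : ℝ)) + 2 ^ (m + 1) * r n ^ (-(m + 1 : ℝ))) := by
        gcongr
        exact (norm_add_le _ _).trans (add_le_add h₁ h₂)
    _ = m ! * 2 ^ (m + 2) * r n ^ (-(m + 1 : ℝ)) := by ring

theorem iteratedDeriv_tsum_two_mul_cexp_div {σ : ℝ}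
    (hs : Summable fun n => Real.exp (σ * r n)) (m : ℕ) (hz : 0 < z.re) :
    iteratedDeriv m (fun w => ∑' n, 2 * w * cexp (σ * r n) / (w ^ 2 + (r n : ℂ) ^ 2)) z =
      ∑' n, cexp (σ * r n) * iteratedDeriv m (fun w => 2 * w / (w ^ 2 + (r n : ℂ) ^ 2)) z := by
  set δ := z.re / 2
  have hδ : 0 < δ := half_pos hz
  have hre : ∀ w ∈ Metric.ball z δ, δ < w.re := fun w hw => by
    have := (abs_re_le_norm (w - z)).trans_lt (mem_ball_iff_norm.1 hw)
    rw [sub_re, abs_lt] at this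
    linarith [show δ = z.re / 2 from rfl]
  have hden : ∀ n, ∀ w ∈ Metric.ball z δ, δ ^ 2 ≤ ‖w ^ 2 + (r n : ℂ) ^ 2‖ := fun n w hw =>
    (pow_le_pow_left₀ hδ.le (hre w hw).le 2).trans (sq_re_le_norm_sq_add_sq w (r n))
  have hterm : ∀ n, (fun w => 2 * w * cexp (σ * r n) / (w ^ 2 + (r n : ℂ) ^ 2)) =
      fun w => cexp (σ * r n) * (2 * w / (w ^ 2 + (r n : ℂ) ^ 2)) := fun n => by
    funext w; ring
  have hdiff : ∀ n, DifferentiableOn ℂ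
      (fun w => 2 * w * cexp (σ * r n) / (w ^ 2 + (r n : ℂ) ^ 2)) (Metric.ball z δ) :=
    fun n => DifferentiableOn.div (by fun_prop) (by fun_prop) fun w hw =>
      norm_pos_iff.1 ((pow_pos hδ 2).trans_le (hden n w hw))
  have hbound : ∀ n, ∀ w ∈ Metric.ball z δ,
      ‖2 * w * cexp (σ * r n) / (w ^ 2 + (r n : ℂ) ^ 2)‖ ≤
        2 * (‖z‖ + δ) / δ ^ 2 * Real.exp (σ * r n) := fun n w hw => by
    have hnorm : ‖w‖ ≤ ‖z‖ + δ := by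
      linarith [norm_le_norm_add_norm_sub' w z, mem_ball_iff_norm.1 hw]
    rw [norm_div, norm_mul, norm_mul, Complex.norm_two, ← ofReal_mul, norm_exp_ofReal]
    calc 2 * ‖w‖ * Real.exp (σ * r n) / ‖w ^ 2 + (r n : ℂ) ^ 2‖
        ≤ 2 * (‖z‖ + δ) * Real.exp (σ * r n) / δ ^ 2 := by
          gcongr
          exact hden n w hw
      _ = 2 * (‖z‖ + δ) / δ ^ 2 * Real.exp (σ * r n) := by ring
  rw [← (hasSum_iteratedDeriv_of_summable_norm (hs.mul_left _) hdiff Metric.isOpen_ball hbound m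
    (Metric.mem_ball_self hδ)).tsum_eq]
  simp only [hterm, iteratedDeriv_const_mul_field]

end TermwiseDerivative

theorem tendsto_tsum_cexp_mul_nhdsLT_zero {r : ℕ → ℝ} (hr : ∀ n, 0 ≤ r n) {D : ℕ → ℂ}
    (hD : Summable fun n => ‖D n‖) :
    Tendsto (fun σ : ℝ => ∑' n, cexp (σ * r n) * D n) (𝓝[<] 0) (𝓝 (∑' n, D n)) := by
  refine tendsto_tsum_of_dominated_convergence hD (fun n => ?_) ?_
  · have : Continuous fun σ : ℝ => cexp (σ * r n) * D n := by fun_prop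
    simpa using (this.tendsto 0).mono_left nhdsWithin_le_nhds
  · filter_upwards [self_mem_nhdsWithin] with σ (hσ : σ < 0) n
    rw [norm_mul, ← ofReal_mul, norm_exp_ofReal]
    exact mul_le_of_le_one_left (norm_nonneg _)
      (Real.exp_le_one_iff.2 (mul_nonpos_of_nonpos_of_nonneg hσ.le (hr n)))

theorem stmt_17_general (d : ℕ) (hd : 0 < d) (lam : ℕ → ℝ)
    (L : ℝ) (hL : 0 < L)
    (hweyl : Tendsto (fun n : ℕ => lam n / (((n : ℝ) + 1) ^ ((2 : ℝ) / (d : ℝ))))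
      atTop (𝓝 L))
    (m : ℕ) (hm : d ≤ m) (ρ : ℂ) (hρ : 0 < ρ.re) :
    Summable (fun n : ℕ =>
      ‖iteratedDeriv m
        (fun z : ℂ => 2 * z / (z ^ 2 + ((Real.sqrt (lam n) : ℂ)) ^ 2)) ρ‖) ∧
    Tendsto
      (fun s0 : ℝ =>
        iteratedDeriv m
          (fun z : ℂ => ∑' n : ℕ,
            2 * z * Complex.exp ((s0 : ℂ) * (Real.sqrt (lam n) : ℂ)) /
              (z ^ 2 + ((Real.sqrt (lam n) : ℂ)) ^ 2)) ρ)
      (𝓝[Set.Iio (0 : ℝ)] 0)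
      (𝓝 (∑' n : ℕ,
        iteratedDeriv m
          (fun z : ℂ => 2 * z / (z ^ 2 + ((Real.sqrt (lam n) : ℂ)) ^ 2)) ρ)) := by
  have hgrow := eventually_sqrt_mul_rpow_le_sqrt_of_tendsto hL hweyl
  have hc : 0 < √(L / 2) := Real.sqrt_pos.2 (half_pos hL)
  have hd' : (0 : ℝ) < d := by exact_mod_cast hd
  have htop := tendsto_atTop_of_eventually_mul_rpow_le hc (by positivity) hgrow
  have hpow : Summable fun n => √(lam n) ^ (-(m + 1 : ℝ)) := by
    refine summable_rpow_neg_of_eventually_mul_rpow_le hc (by positivity) ?_ hgrow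
    rw [div_div, div_mul_eq_mul_div, one_lt_div (by positivity)]
    have : (d : ℝ) ≤ m := by exact_mod_cast hm
    linarith
  have hsum := summable_norm_iteratedDeriv_two_mul_div (z := ρ) m htop hpow
  refine ⟨hsum, ?_⟩
  refine (tendsto_tsum_cexp_mul_nhdsLT_zero (fun n => Real.sqrt_nonneg (lam n)) hsum).congr' ?_
  filter_upwards [self_mem_nhdsWithin] with σ (hσ : σ < 0)
  exact (iteratedDeriv_tsum_two_mul_cexp_div
    (summable_exp_mul_of_summable_rpow_neg hσ htop hpow) m hρ).symm

/-- With `ρ_n = √λ_n` and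
`F_{s₀}(ρ) = Σ_{n≥1} 2ρ e^{s₀ ρ_n}/(ρ² + ρ_n²)`, for every integer `m ≥ d` and every
`ρ` with `Re ρ > 0`, the termwise `m`-th derivative series of `Σ_n 2ρ/(ρ² + ρ_n²)`
converges absolutely and `lim_{s₀→0⁻} F_{s₀}^{(m)}(ρ)` equals its sum. -/
theorem stmt_17 (d : ℕ) (hd : 0 < d) (lam : ℕ → ℝ) (hpos : ∀ n, 0 < lam n)
    (hmono : Monotone lam) (L : ℝ) (hL : 0 < L)
    (hweyl : Tendsto (fun n : ℕ => lam n / (((n : ℝ) + 1) ^ ((2 : ℝ) / (d : ℝ))))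
      atTop (𝓝 L))
    (m : ℕ) (hm : d ≤ m) (ρ : ℂ) (hρ : 0 < ρ.re) :
    Summable (fun n : ℕ =>
      ‖iteratedDeriv m
        (fun z : ℂ => 2 * z / (z ^ 2 + ((Real.sqrt (lam n) : ℂ)) ^ 2)) ρ‖) ∧
    Tendsto
      (fun s0 : ℝ =>
        iteratedDeriv m
          (fun z : ℂ => ∑' n : ℕ,
            2 * z * Complex.exp ((s0 : ℂ) * (Real.sqrt (lam n) : ℂ)) /
              (z ^ 2 + ((Real.sqrt (lam n) : ℂ)) ^ 2)) ρ)
      (𝓝[Set.Iio (0 : ℝ)] 0)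
      (𝓝 (∑' n : ℕ,
        iteratedDeriv m
          (fun z : ℂ => 2 * z / (z ^ 2 + ((Real.sqrt (lam n) : ℂ)) ^ 2)) ρ)) :=
  stmt_17_general d hd lam L hL hweyl m hm ρ hρ
end

section
/- For every complex t with Re t > 0, the series Σ_{j=0}^{∞} (2j+1) e^{−t(j + 1/2)} converges absolutely and equals cosh(t/2) / (2 sinh²(t/2)). -/
/-!
With `v = exp (-t/2)` the series is `∑ (2j+1) v^(2j+1)`, a combination of the geometric series in
`v²` and its derivative, whose sum is `v (1 + v²) / (1 - v²)²`. Since `1 ± v² = 2v · cosh (t/2)`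
resp. `2v · sinh (t/2)`, this is `cosh (t/2) / (2 sinh² (t/2))`. Absolute convergence is the same
computation for `‖v‖ < 1` in `ℝ`.
-/

theorem hasSum_odd_mul_pow_odd {𝕜 : Type*} [NormedField 𝕜] {x : 𝕜} (hx : ‖x‖ < 1) :
    HasSum (fun j : ℕ => (2 * (j : 𝕜) + 1) * x ^ (2 * j + 1))
      (x * (1 + x ^ 2) / (1 - x ^ 2) ^ 2) := by
  have hq : ‖x ^ 2‖ < 1 := by
    rw [norm_pow]; exact pow_lt_one₀ (norm_nonneg x) hx two_ne_zero
  have hq1 : 1 - x ^ 2 ≠ 0 := by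
    intro h
    rw [← sub_eq_zero.mp h, norm_one] at hq
    exact hq.false
  have h := (((hasSum_coe_mul_geometric_of_norm_lt_one hq).mul_left 2).add
    (hasSum_geometric_of_norm_lt_one hq)).mul_left x
  rw [show x * (1 + x ^ 2) / (1 - x ^ 2) ^ 2 = x * (2 * (x ^ 2 / (1 - x ^ 2) ^ 2) + (1 - x ^ 2)⁻¹) by
    field_simp; ring]
  exact h.congr_fun fun j => by ring

theorem summable_norm_odd_mul_pow_odd {𝕜 : Type*} [RCLike 𝕜] {x : 𝕜} (hx : ‖x‖ < 1) :
    Summable (fun j : ℕ => ‖(2 * (j : 𝕜) + 1) * x ^ (2 * j + 1)‖) := by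
  refine (hasSum_odd_mul_pow_odd (x := ‖x‖) (by rwa [norm_norm])).summable.congr fun j => ?_
  rw [norm_mul, norm_pow, show 2 * (j : 𝕜) + 1 = ((2 * j + 1 : ℕ) : 𝕜) by push_cast; ring,
    RCLike.norm_natCast]
  push_cast; rfl

theorem Complex.cosh_div_two_mul_sinh_sq (z : ℂ) :
    Complex.cosh z / (2 * Complex.sinh z ^ 2) =
      Complex.exp (-z) * (1 + Complex.exp (-z) ^ 2) / (1 - Complex.exp (-z) ^ 2) ^ 2 := by
  set v := Complex.exp (-z)
  have hv : v ≠ 0 := Complex.exp_ne_zero _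
  have hinv : Complex.exp z * v = 1 := by rw [← Complex.exp_add, add_neg_cancel, Complex.exp_zero]
  have hcosh : 1 + v ^ 2 = 2 * v * Complex.cosh z := by
    rw [mul_assoc, mul_left_comm, Complex.two_cosh]; linear_combination -hinv
  have hsinh : 1 - v ^ 2 = 2 * v * Complex.sinh z := by
    rw [mul_assoc, mul_left_comm, Complex.two_sinh]; linear_combination -hinv
  rw [hcosh, hsinh]
  have h2v : 2 * v ^ 2 ≠ 0 := mul_ne_zero two_ne_zero (pow_ne_zero 2 hv)
  rw [← mul_div_mul_left _ _ h2v]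
  ring

/-- For every complex `t` with `Re t > 0`, the series
`Σ_{j≥0} (2j+1) e^{-t(j+1/2)}` converges absolutely and equals
`cosh(t/2)/(2 sinh²(t/2))`. -/
theorem stmt_18 (t : ℂ) (ht : 0 < t.re) :
    Summable (fun j : ℕ => ‖(2 * (j : ℂ) + 1) * Complex.exp (-t * ((j : ℂ) + 1 / 2))‖) ∧
    ∑' j : ℕ, (2 * (j : ℂ) + 1) * Complex.exp (-t * ((j : ℂ) + 1 / 2))
      = Complex.cosh (t / 2) / (2 * Complex.sinh (t / 2) ^ 2) := by
  have hv : ‖Complex.exp (-(t / 2))‖ < 1 := by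
    rw [Complex.norm_exp, Real.exp_lt_one_iff, Complex.neg_re, Complex.div_ofNat_re]
    linarith
  have hpow (j : ℕ) : Complex.exp (-t * ((j : ℂ) + 1 / 2)) = Complex.exp (-(t / 2)) ^ (2 * j + 1) := by
    rw [← Complex.exp_nat_mul]; push_cast; ring_nf
  simp only [hpow]
  exact ⟨summable_norm_odd_mul_pow_odd hv,
    by rw [(hasSum_odd_mul_pow_odd hv).tsum_eq, Complex.cosh_div_two_mul_sinh_sq]⟩
end
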